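/- arXiv:1910.14378 — 5 statements merged into one kernel-verified Lean document; each statement's English description precedes it below -/
import Mathlib

section
/- Quasi-optimality of the minimal residual projection: suppose u_r ∈ U_r satisfies ‖r(u_r)‖_{U'} = min_{w ∈ U_r} ‖r(w)‖_{U'} and ζ_r > 0. Then ‖u − u_r‖_U ≤ (ι_r/ζ_r) · ‖u − P_{U_r} u‖_U. -/
open Matrix
open scoped ComplexOrder

noncomputable section

variable {𝕂 : Type*} [RCLike 𝕂]

/-- Canonical ℓ2 inner product on `𝕂^n` (conjugate-linear in the first argument). -/
def ip2 {n : ℕ} (x y : Fin n → 𝕂) : 𝕂 := star x ⬝ᵥ y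

/-- Canonical ℓ2 norm on `𝕂^n`. -/
def norm2 {n : ℕ} (x : Fin n → 𝕂) : ℝ := Real.sqrt (RCLike.re (ip2 x x))

/-- Inner product `⟨x,y⟩_U := ⟨R x, y⟩` on `U = 𝕂^n`. -/
def ipU {n : ℕ} (R : Matrix (Fin n) (Fin n) 𝕂) (x y : Fin n → 𝕂) : 𝕂 := ip2 (R *ᵥ x) y

/-- Norm `‖·‖_U` associated with `⟨·,·⟩_U`. -/
def normU {n : ℕ} (R : Matrix (Fin n) (Fin n) 𝕂) (x : Fin n → 𝕂) : ℝ :=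
  Real.sqrt (RCLike.re (ipU R x x))

/-- Dual inner product `⟨x,y⟩_{U'} := ⟨x, R⁻¹ y⟩` on `U' = 𝕂^n`. -/
def ipDual {n : ℕ} (R : Matrix (Fin n) (Fin n) 𝕂) (x y : Fin n → 𝕂) : 𝕂 := ip2 x (R⁻¹ *ᵥ y)

/-- Dual norm `‖·‖_{U'}`. -/
def normDual {n : ℕ} (R : Matrix (Fin n) (Fin n) 𝕂) (x : Fin n → 𝕂) : ℝ :=
  Real.sqrt (RCLike.re (ipDual R x x))

/-- Sketched semi-inner product `⟨x,y⟩_U^Θ := ⟨Θ x, Θ y⟩`. -/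
def ipUS {n k : ℕ} (Θ : Matrix (Fin k) (Fin n) 𝕂) (x y : Fin n → 𝕂) : 𝕂 :=
  ip2 (Θ *ᵥ x) (Θ *ᵥ y)

/-- Sketched seminorm `‖·‖_U^Θ`. -/
def normUS {n k : ℕ} (Θ : Matrix (Fin k) (Fin n) 𝕂) (x : Fin n → 𝕂) : ℝ :=
  Real.sqrt (RCLike.re (ipUS Θ x x))

/-- Sketched dual seminorm `‖x‖_{U'}^Θ = ‖Θ R⁻¹ x‖`. -/
def normDualS {n k : ℕ} (Θ : Matrix (Fin k) (Fin n) 𝕂) (R : Matrix (Fin n) (Fin n) 𝕂)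
    (x : Fin n → 𝕂) : ℝ :=
  normUS Θ (R⁻¹ *ᵥ x)

/-- `Θ` is an `ε`-embedding for the subspace `V` of `U`. -/
def IsEmb {n k : ℕ} (R : Matrix (Fin n) (Fin n) 𝕂) (Θ : Matrix (Fin k) (Fin n) 𝕂)
    (V : Submodule 𝕂 (Fin n → 𝕂)) (ε : ℝ) : Prop :=
  ∀ x ∈ V, ∀ y ∈ V, ‖ipU R x y - ipUS Θ x y‖ ≤ ε * normU R x * normU R y

/-- Distance (in `‖·‖_U`) from `v` to the subspace `W`; equals `‖v - P_W v‖_U`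
where `P_W` is the `⟨·,·⟩_U`-orthogonal projection onto `W`. -/
def distU {n : ℕ} (R : Matrix (Fin n) (Fin n) 𝕂) (v : Fin n → 𝕂)
    (W : Submodule 𝕂 (Fin n → 𝕂)) : ℝ :=
  sInf {t | ∃ w ∈ W, t = normU R (v - w)}

/-- Set of ratios `num x / den x` over nonzero `x ∈ S`. -/
def ratioSet {n : ℕ} (S : Submodule 𝕂 (Fin n → 𝕂)) (num den : (Fin n → 𝕂) → ℝ) : Set ℝ :=
  {t | ∃ x ∈ S, x ≠ 0 ∧ t = num x / den x}

/-- Library `L_r(D)` of all subspaces spanned by `r` vectors from the dictionary `D`. -/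
def LrD {n : ℕ} (D : Finset (Fin n → 𝕂)) (r : ℕ) : Set (Submodule 𝕂 (Fin n → 𝕂)) :=
  {W | ∃ S : Finset (Fin n → 𝕂), S ⊆ D ∧ S.card = r ∧
    W = Submodule.span 𝕂 (S : Set (Fin n → 𝕂))}

/-- Set of ratios `num x / den x` over nonzero `x ∈ span{u} + W` with `W ∈ L_r(D)`. -/
def dictRatioSet {n : ℕ} (D : Finset (Fin n → 𝕂)) (r : ℕ) (u : Fin n → 𝕂)
    (num den : (Fin n → 𝕂) → ℝ) : Set ℝ :=
  {t | ∃ W ∈ LrD D r, ∃ x ∈ Submodule.span 𝕂 {u} ⊔ W, x ≠ 0 ∧ t = num x / den x}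

/-- The subspace `R_r(U_r) = span {R⁻¹ (b - A x) : x ∈ U_r}`. -/
def RrSub {n : ℕ} (R A : Matrix (Fin n) (Fin n) 𝕂) (b : Fin n → 𝕂)
    (Ur : Submodule 𝕂 (Fin n → 𝕂)) : Submodule 𝕂 (Fin n → 𝕂) :=
  Submodule.span 𝕂 {v | ∃ x ∈ Ur, v = R⁻¹ *ᵥ (b - A *ᵥ x)}

/-- Dictionary-based `r`-width `σ_r(M; K)`. -/
def sigmaW {n : ℕ} (R : Matrix (Fin n) (Fin n) 𝕂) (M : Set (Fin n → 𝕂)) (r K : ℕ) : ℝ :=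
  sInf {t | ∃ D : Finset (Fin n → 𝕂), D.card = K ∧
    t = sSup {s | ∃ v ∈ M, s = sInf {e | ∃ W ∈ LrD D r, e = distU R v W}}}

/-- Nonlinear Kolmogorov `r`-width `d_r(M; m)` with a library of `m` subspaces. -/
def dW {n : ℕ} (R : Matrix (Fin n) (Fin n) 𝕂) (M : Set (Fin n → 𝕂)) (r m : ℕ) : ℝ :=
  sInf {t | ∃ L : Finset (Submodule 𝕂 (Fin n → 𝕂)), L.card = m ∧
    (∀ W ∈ L, Module.finrank 𝕂 ↥W ≤ r) ∧
    t = sSup {s | ∃ v ∈ M, s = sInf {e | ∃ W ∈ L, e = distU R v W}}}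

/-- A posteriori estimator `ω̄` of the embedding constant of `Θ` for `V`,
computed from a second embedding `Θs`. -/
def omegaBar {n k ks : ℕ} (ε : ℝ) (Θ : Matrix (Fin k) (Fin n) 𝕂)
    (Θs : Matrix (Fin ks) (Fin n) 𝕂) (V : Submodule 𝕂 (Fin n → 𝕂)) : ℝ :=
  max (1 - (1 - ε) * sInf {t | ∃ x ∈ V, x ≠ 0 ∧ t = (normUS Θ x / normUS Θs x) ^ 2})
      ((1 + ε) * sSup {t | ∃ x ∈ V, x ≠ 0 ∧ t = (normUS Θ x / normUS Θs x) ^ 2} - 1)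

lemma norm2_eq_norm {n : ℕ} (v : Fin n → 𝕂) :
    norm2 v = ‖(WithLp.equiv 2 (Fin n → 𝕂)).symm v‖ := by
  rw [norm_eq_sqrt_re_inner (𝕜 := 𝕂)]
  unfold norm2 ip2
  rw [dotProduct_comm]
  rfl

lemma norm2_nonneg {n : ℕ} (v : Fin n → 𝕂) : 0 ≤ norm2 v := Real.sqrt_nonneg _

lemma norm2_pos {n : ℕ} {v : Fin n → 𝕂} (hv : v ≠ 0) : 0 < norm2 v := by
  rw [norm2_eq_norm]
  refine norm_pos_iff.mpr (fun h => hv ?_)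
  simpa using congrArg (WithLp.equiv 2 (Fin n → 𝕂)) h

lemma exists_bound {n : ℕ} (M : Matrix (Fin n) (Fin n) 𝕂) :
    ∃ C, 0 ≤ C ∧ ∀ v, norm2 (M *ᵥ v) ≤ C * norm2 v := by
  let f := LinearMap.toContinuousLinearMap (Matrix.toEuclideanLin M)
  refine ⟨‖f‖, norm_nonneg _, fun v => ?_⟩
  have h := f.le_opNorm ((WithLp.equiv 2 (Fin n → 𝕂)).symm v)
  have he : f ((WithLp.equiv 2 (Fin n → 𝕂)).symm v)
      = (WithLp.equiv 2 (Fin n → 𝕂)).symm (M *ᵥ v) := rfl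
  rw [norm2_eq_norm, norm2_eq_norm, ← he]
  exact h

lemma ip2_sq_left {n : ℕ} {T : Matrix (Fin n) (Fin n) 𝕂} (hT : T.IsHermitian)
    (x : Fin n → 𝕂) : ip2 ((T * T) *ᵥ x) x = ip2 (T *ᵥ x) (T *ᵥ x) := by
  unfold ip2
  rw [← Matrix.mulVec_mulVec, Matrix.star_mulVec, ← Matrix.dotProduct_mulVec, hT.eq]

lemma ip2_sq_right {n : ℕ} {S : Matrix (Fin n) (Fin n) 𝕂} (hS : S.IsHermitian)
    (y : Fin n → 𝕂) : ip2 y ((S * S) *ᵥ y) = ip2 (S *ᵥ y) (S *ᵥ y) := by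
  unfold ip2
  rw [← Matrix.mulVec_mulVec, Matrix.dotProduct_mulVec, Matrix.star_mulVec, hS.eq]

lemma norm2_zero {n : ℕ} : norm2 (0 : Fin n → 𝕂) = 0 := by simp [norm2, ip2]

/-- Quasi-optimality of the minimal residual projection. -/
theorem minres_quasi_optimality {𝕂 : Type*} [RCLike 𝕂] {n : ℕ}
    (R A : Matrix (Fin n) (Fin n) 𝕂) (hR : R.PosDef) (hA : IsUnit A.det)
    (b u : Fin n → 𝕂) (hu : u = A⁻¹ *ᵥ b)
    (Ur : Submodule 𝕂 (Fin n → 𝕂)) (hUr : Ur ≠ ⊥)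
    (ur : Fin n → 𝕂) (hur : ur ∈ Ur)
    (hmin : ∀ w ∈ Ur, normDual R (b - A *ᵥ ur) ≤ normDual R (b - A *ᵥ w))
    (ζ ι : ℝ)
    (hζ : ζ = sInf (ratioSet (Submodule.span 𝕂 {u} ⊔ Ur)
        (fun x => normDual R (A *ᵥ x)) (normU R)))
    (hι : ι = sSup (ratioSet (Submodule.span 𝕂 {u} ⊔ Ur)
        (fun x => normDual R (A *ᵥ x)) (normU R)))
    (hζpos : 0 < ζ) :
    normU R (u - ur) ≤ (ι / ζ) * distU R u Ur := by
  classical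
  obtain ⟨T, hT, hTT⟩ : ∃ T : Matrix (Fin n) (Fin n) 𝕂, T.IsHermitian ∧ T * T = R := by
    open scoped MatrixOrder in
    exact ⟨CFC.sqrt R, (Matrix.nonneg_iff_posSemidef.mp (CFC.sqrt_nonneg R)).1,
      CFC.sqrt_mul_sqrt_self R (Matrix.nonneg_iff_posSemidef.mpr hR.posSemidef)⟩
  have hRinv : (R⁻¹).PosDef := hR.inv
  obtain ⟨S, hS, hSS⟩ : ∃ S : Matrix (Fin n) (Fin n) 𝕂, S.IsHermitian ∧ S * S = R⁻¹ := by
    open scoped MatrixOrder in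
    exact ⟨CFC.sqrt R⁻¹, (Matrix.nonneg_iff_posSemidef.mp (CFC.sqrt_nonneg R⁻¹)).1,
      CFC.sqrt_mul_sqrt_self R⁻¹ (Matrix.nonneg_iff_posSemidef.mpr hRinv.posSemidef)⟩
  have hgU : ∀ x : Fin n → 𝕂, normU R x = norm2 (T *ᵥ x) := by
    intro x
    unfold normU norm2 ipU
    rw [← hTT, ip2_sq_left hT]
  have hgD : ∀ y : Fin n → 𝕂, normDual R y = norm2 (S *ᵥ y) := by
    intro y
    unfold normDual norm2 ipDual
    rw [← hSS, ip2_sq_right hS]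
  have hRdet : IsUnit R.det := isUnit_iff_ne_zero.mpr hR.det_pos.ne'
  have hTdet : IsUnit T.det := by
    have h2 : T.det * T.det = R.det := by rw [← Matrix.det_mul, hTT]
    exact isUnit_of_mul_isUnit_left (h2 ▸ hRdet)
  have hUpos : ∀ x : Fin n → 𝕂, x ≠ 0 → 0 < normU R x := by
    intro x hx
    rw [hgU]
    refine norm2_pos fun h => hx ?_
    have hinj : Function.Injective T.mulVec :=
      Matrix.mulVec_injective_iff_isUnit.mpr ((Matrix.isUnit_iff_isUnit_det T).mpr hTdet)
    exact hinj (h.trans (Matrix.mulVec_zero T).symm)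
  have hU0 : normU R 0 = 0 := by rw [hgU, Matrix.mulVec_zero, norm2_zero]
  have hDnonneg : ∀ y : Fin n → 𝕂, 0 ≤ normDual R y := fun y => Real.sqrt_nonneg _
  have hUnonneg : ∀ x : Fin n → 𝕂, 0 ≤ normU R x := fun x => Real.sqrt_nonneg _
  have hb : A *ᵥ u = b := by
    rw [hu, Matrix.mulVec_mulVec, Matrix.mul_nonsing_inv A hA, Matrix.one_mulVec]
  set V := Submodule.span 𝕂 {u} ⊔ Ur with hV
  obtain ⟨C1, hC1, hC1b⟩ := exists_bound (S * A)
  obtain ⟨C2, hC2, hC2b⟩ := exists_bound (T⁻¹)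
  have hxT : ∀ x : Fin n → 𝕂, T⁻¹ *ᵥ (T *ᵥ x) = x := by
    intro x
    rw [Matrix.mulVec_mulVec, Matrix.nonsing_inv_mul T hTdet, Matrix.one_mulVec]
  have hratio_bound : ∀ x : Fin n → 𝕂, normDual R (A *ᵥ x) ≤ (C1 * C2) * normU R x := by
    intro x
    have h1 : normDual R (A *ᵥ x) ≤ C1 * norm2 x := by
      rw [hgD, Matrix.mulVec_mulVec]; exact hC1b x
    have h2 : norm2 x ≤ C2 * normU R x := by
      rw [hgU]
      calc norm2 x = norm2 (T⁻¹ *ᵥ (T *ᵥ x)) := by rw [hxT]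
        _ ≤ C2 * norm2 (T *ᵥ x) := hC2b _
    calc normDual R (A *ᵥ x) ≤ C1 * norm2 x := h1
      _ ≤ C1 * (C2 * normU R x) := mul_le_mul_of_nonneg_left h2 hC1
      _ = (C1 * C2) * normU R x := by ring
  have hbdd : BddAbove (ratioSet V (fun x => normDual R (A *ᵥ x)) (normU R)) := by
    refine ⟨C1 * C2, fun t ht => ?_⟩
    obtain ⟨x, hxV, hx0, rfl⟩ := ht
    exact (div_le_iff₀ (hUpos x hx0)).mpr (hratio_bound x)
  have hbddb : BddBelow (ratioSet V (fun x => normDual R (A *ᵥ x)) (normU R)) := by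
    refine ⟨0, fun t ht => ?_⟩
    obtain ⟨x, hxV, hx0, rfl⟩ := ht
    exact div_nonneg (hDnonneg _) (hUnonneg _)
  obtain ⟨v0, hv0U, hv00⟩ := Submodule.exists_mem_ne_zero_of_ne_bot hUr
  have hne : (ratioSet V (fun x => normDual R (A *ᵥ x)) (normU R)).Nonempty :=
    ⟨_, ⟨v0, Submodule.mem_sup_right hv0U, hv00, rfl⟩⟩
  have hζι : ζ ≤ ι := by rw [hζ, hι]; exact csInf_le_csSup hne hbddb hbdd
  have hιpos : 0 < ι := lt_of_lt_of_le hζpos hζι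
  have hlow : ∀ x, x ∈ V → ζ * normU R x ≤ normDual R (A *ᵥ x) := by
    intro x hxV
    by_cases hx0 : x = 0
    · subst hx0
      rw [hU0, mul_zero]
      exact hDnonneg _
    · have hmem : ζ ≤ normDual R (A *ᵥ x) / normU R x := by
        rw [hζ]; exact csInf_le hbddb ⟨x, hxV, hx0, rfl⟩
      exact (le_div_iff₀ (hUpos x hx0)).mp hmem
  have hhigh : ∀ x, x ∈ V → normDual R (A *ᵥ x) ≤ ι * normU R x := by
    intro x hxV
    by_cases hx0 : x = 0
    · subst hx0
      rw [hU0, mul_zero, Matrix.mulVec_zero, hgD, Matrix.mulVec_zero, norm2_zero]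
    · have hmem : normDual R (A *ᵥ x) / normU R x ≤ ι := by
        rw [hι]; exact le_csSup hbdd ⟨x, hxV, hx0, rfl⟩
      exact (div_le_iff₀ (hUpos x hx0)).mp hmem
  have huV : u ∈ V := Submodule.mem_sup_left (Submodule.mem_span_singleton_self u)
  have hsubV : ∀ w ∈ Ur, u - w ∈ V := fun w hw =>
    sub_mem huV (Submodule.mem_sup_right hw)
  have key : ∀ w ∈ Ur, ζ * normU R (u - ur) ≤ ι * normU R (u - w) := by
    intro w hw
    have h1 := hlow (u - ur) (hsubV ur hur)
    have h2 := hhigh (u - w) (hsubV w hw)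
    rw [Matrix.mulVec_sub, hb] at h1 h2
    calc ζ * normU R (u - ur) ≤ normDual R (b - A *ᵥ ur) := h1
      _ ≤ normDual R (b - A *ᵥ w) := hmin w hw
      _ ≤ ι * normU R (u - w) := h2
  unfold distU
  have hSdne : {t | ∃ w ∈ Ur, t = normU R (u - w)}.Nonempty :=
    ⟨normU R (u - 0), 0, Ur.zero_mem, rfl⟩
  have hInf : ζ * normU R (u - ur) / ι ≤ sInf {t | ∃ w ∈ Ur, t = normU R (u - w)} := by
    refine le_csInf hSdne fun t ht => ?_
    obtain ⟨w, hw, rfl⟩ := ht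
    rw [div_le_iff₀ hιpos]
    nlinarith [key w hw]
  rw [div_le_iff₀ hιpos] at hInf
  rw [div_mul_eq_mul_div, le_div_iff₀ hζpos]
  nlinarith

end
end

section
/- Conditioning of the reduced normal system: suppose ζ_r > 0 and let U_r ∈ 𝕂^{n×r} be a matrix whose columns form a ⟨·,·⟩_U-orthonormal basis of the subspace U_r. Then the reduced matrix A_r := U_r^H A^H R_U⁻¹ A U_r ∈ 𝕂^{r×r} is invertible and its spectral condition number satisfies κ(A_r) := ‖A_r‖·‖A_r⁻¹‖ ≤ (ι_r/ζ_r)². -/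
open Matrix
open scoped ComplexOrder

noncomputable section

variable {𝕂 : Type*} [RCLike 𝕂]

section Aux

variable {k : ℕ}

/-- Shorthand: view a function as a Euclidean space vector. -/
def eV {k : ℕ} (z : Fin k → 𝕂) : EuclideanSpace 𝕂 (Fin k) := (WithLp.equiv 2 _).symm z

lemma eV_zero : eV (0 : Fin k → 𝕂) = 0 := by simp [eV]

lemma eV_eq_zero_iff {z : Fin k → 𝕂} : eV z = 0 ↔ z = 0 := by
  constructor
  · intro h
    have := congrArg (WithLp.equiv 2 _) (h.trans (eV_zero (𝕂 := 𝕂)).symm)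
    simpa [eV] using this
  · rintro rfl; exact eV_zero

lemma clm_eV (M : Matrix (Fin k) (Fin k) 𝕂) (z : Fin k → 𝕂) :
    Matrix.toEuclideanCLM (𝕜 := 𝕂) M (eV z) = eV (M *ᵥ z) := by
  rfl

lemma inner_eV (a b : Fin k → 𝕂) :
    (inner 𝕂 (eV a) (eV b)) = dotProduct (star a) b :=
  (EuclideanSpace.inner_toLp_toLp a b).trans (dotProduct_comm _ _)

lemma norm_eV_sq (z : Fin k → 𝕂) :
    ‖eV z‖ ^ 2 = RCLike.re (dotProduct (star z) z) := by
  rw [← inner_eV z z, inner_self_eq_norm_sq]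

/-- Quadratic form of `Cᴴ * M * C`. -/
lemma quad_conj {m : ℕ} (M : Matrix (Fin m) (Fin m) 𝕂) (C : Matrix (Fin m) (Fin k) 𝕂)
    (z : Fin k → 𝕂) :
    dotProduct (star z) ((Cᴴ * M * C) *ᵥ z) =
      dotProduct (star (C *ᵥ z)) (M *ᵥ (C *ᵥ z)) := by
  simp [Matrix.star_mulVec, dotProduct_mulVec, Matrix.vecMul_vecMul, Matrix.mul_assoc]

/-- Commutation of a Hermitian matrix inside `ip`-style products. -/
lemma herm_dot {m : ℕ} {M : Matrix (Fin m) (Fin m) 𝕂} (hM : Mᴴ = M) (a b : Fin m → 𝕂) :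
    dotProduct (star (M *ᵥ a)) b = dotProduct (star a) (M *ᵥ b) := by
  rw [Matrix.star_mulVec, hM, ← dotProduct_mulVec]

/-- Norm bound for a PSD matrix with bounded quadratic form. -/
lemma opNorm_le_of_quad {M : Matrix (Fin k) (Fin k) 𝕂} (hM : M.PosSemidef) {C : ℝ} (hC : 0 ≤ C)
    (h : ∀ z : Fin k → 𝕂,
      RCLike.re (dotProduct (star z) (M *ᵥ z)) ≤ C ^ 2 * ‖eV z‖ ^ 2) :
    ‖Matrix.toEuclideanCLM (𝕜 := 𝕂) M‖ ≤ C ^ 2 := by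
  open scoped MatrixOrder in set Q := CFC.sqrt M with hQdef
  have hQQ : Q * Q = M := open scoped MatrixOrder in CFC.sqrt_mul_sqrt_self M hM.nonneg
  have hQH : Qᴴ = Q := (open scoped MatrixOrder in (CFC.sqrt_nonneg M).posSemidef).1
  have key : ∀ x : EuclideanSpace 𝕂 (Fin k), ‖Matrix.toEuclideanCLM (𝕜 := 𝕂) Q x‖ ≤ C * ‖x‖ := by
    intro x
    obtain ⟨z, rfl⟩ : ∃ z : Fin k → 𝕂, eV z = x := ⟨WithLp.equiv 2 _ x, rfl⟩
    have h1 : ‖Matrix.toEuclideanCLM (𝕜 := 𝕂) Q (eV z)‖ ^ 2 =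
        RCLike.re (dotProduct (star z) (M *ᵥ z)) := by
      rw [clm_eV, norm_eV_sq, herm_dot hQH, Matrix.mulVec_mulVec, hQQ]
    have h2 : ‖Matrix.toEuclideanCLM (𝕜 := 𝕂) Q (eV z)‖ ^ 2 ≤ (C * ‖eV z‖) ^ 2 := by
      rw [h1, mul_pow]; exact h z
    exact (pow_le_pow_iff_left₀ (norm_nonneg _) (by positivity) two_ne_zero).mp h2
  have hQn : ‖Matrix.toEuclideanCLM (𝕜 := 𝕂) Q‖ ≤ C :=
    ContinuousLinearMap.opNorm_le_bound _ hC key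
  calc ‖Matrix.toEuclideanCLM (𝕜 := 𝕂) M‖
      = ‖Matrix.toEuclideanCLM (𝕜 := 𝕂) Q * Matrix.toEuclideanCLM (𝕜 := 𝕂) Q‖ := by
        rw [← _root_.map_mul, hQQ]
    _ ≤ ‖Matrix.toEuclideanCLM (𝕜 := 𝕂) Q‖ * ‖Matrix.toEuclideanCLM (𝕜 := 𝕂) Q‖ := norm_mul_le _ _
    _ ≤ C * C := mul_le_mul hQn hQn (norm_nonneg _) hC
    _ = C ^ 2 := (sq C).symm

/-- Coercive PSD matrices are positive definite and have bounded inverses. -/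
lemma posDef_and_inv_norm_le_of_quad {M : Matrix (Fin k) (Fin k) 𝕂} (hM : M.PosSemidef)
    {c : ℝ} (hc : 0 < c)
    (h : ∀ z : Fin k → 𝕂,
      c ^ 2 * ‖eV z‖ ^ 2 ≤ RCLike.re (dotProduct (star z) (M *ᵥ z))) :
    M.PosDef ∧ ‖Matrix.toEuclideanCLM (𝕜 := 𝕂) M⁻¹‖ ≤ (c ^ 2)⁻¹ := by
  have hpd : M.PosDef := by
    refine posDef_iff_dotProduct_mulVec.mpr ⟨hM.1, fun z hz => lt_of_le_of_ne (hM.dotProduct_mulVec_nonneg z) fun heq => ?_⟩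
    have hzpos : 0 < c ^ 2 * ‖eV z‖ ^ 2 := by
      have : eV z ≠ 0 := fun h0 => hz (eV_eq_zero_iff.mp h0)
      have : 0 < ‖eV z‖ := norm_pos_iff.mpr this
      positivity
    have := (h z).trans_eq (by rw [← heq, map_zero])
    linarith
  refine ⟨hpd, ?_⟩
  have hdet : IsUnit M.det := hpd.det_pos.ne'.isUnit
  refine ContinuousLinearMap.opNorm_le_bound _ (by positivity) fun y => ?_
  obtain ⟨w, rfl⟩ : ∃ w : Fin k → 𝕂, eV w = y := ⟨WithLp.equiv 2 _ y, rfl⟩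
  rw [clm_eV]
  set z : Fin k → 𝕂 := M⁻¹ *ᵥ w with hzdef
  have hMz : M *ᵥ z = w := by
    rw [hzdef, Matrix.mulVec_mulVec, Matrix.mul_nonsing_inv _ hdet, Matrix.one_mulVec]
  rcases eq_or_ne z 0 with h0 | h0
  · rw [h0, eV_zero, norm_zero]; positivity
  · have hzn : 0 < ‖eV z‖ := norm_pos_iff.mpr fun hh => h0 (eV_eq_zero_iff.mp hh)
    have hcs : RCLike.re (dotProduct (star z) (M *ᵥ z)) ≤ ‖eV z‖ * ‖eV w‖ := by
      rw [← inner_eV z (M *ᵥ z)]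
      calc RCLike.re (inner 𝕂 (eV z) (eV (M *ᵥ z))) ≤ ‖eV z‖ * ‖eV (M *ᵥ z)‖ :=
            re_inner_le_norm _ _
        _ = ‖eV z‖ * ‖eV w‖ := by rw [hMz]
    have hkey : c ^ 2 * ‖eV z‖ ^ 2 ≤ ‖eV z‖ * ‖eV w‖ := (h z).trans hcs
    rw [inv_mul_eq_div, le_div_iff₀ (by positivity)]
    nlinarith [norm_nonneg (eV w)]

end Aux

set_option maxHeartbeats 1600000

/-- Conditioning of the reduced normal system. -/
theorem minres_reduced_system_conditioning {𝕂 : Type*} [RCLike 𝕂] {n r : ℕ}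
    (R A : Matrix (Fin n) (Fin n) 𝕂) (hR : R.PosDef) (hA : IsUnit A.det)
    (b u : Fin n → 𝕂) (hu : u = A⁻¹ *ᵥ b)
    (UrS : Submodule 𝕂 (Fin n → 𝕂)) (hUrS : UrS ≠ ⊥)
    (Um : Matrix (Fin n) (Fin r) 𝕂)
    (hspan : Submodule.span 𝕂 (Set.range fun j : Fin r => fun i => Um i j) = UrS)
    (horth : ∀ j j' : Fin r,
      ipU R (fun i => Um i j) (fun i => Um i j') = if j = j' then 1 else 0)
    (ζ ι : ℝ)
    (hζ : ζ = sInf (ratioSet (Submodule.span 𝕂 {u} ⊔ UrS)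
        (fun x => normDual R (A *ᵥ x)) (normU R)))
    (hι : ι = sSup (ratioSet (Submodule.span 𝕂 {u} ⊔ UrS)
        (fun x => normDual R (A *ᵥ x)) (normU R)))
    (hζpos : 0 < ζ) :
    IsUnit (Umᴴ * Aᴴ * R⁻¹ * A * Um).det ∧
      ‖Matrix.toEuclideanCLM (𝕜 := 𝕂) (Umᴴ * Aᴴ * R⁻¹ * A * Um)‖ *
        ‖Matrix.toEuclideanCLM (𝕜 := 𝕂) (Umᴴ * Aᴴ * R⁻¹ * A * Um)⁻¹‖ ≤ (ι / ζ) ^ 2 := by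
  have hR1 : Rᴴ = R := hR.1
  have hRinv : (R⁻¹).PosDef := hR.inv
  have hRinvH : (R⁻¹)ᴴ = R⁻¹ := hRinv.1
  set C := A * Um with hCdef
  set B := Umᴴ * Aᴴ * R⁻¹ * A * Um with hBdef
  have hBC : B = Cᴴ * R⁻¹ * C := by
    rw [hBdef, hCdef, Matrix.conjTranspose_mul]; simp [Matrix.mul_assoc]
  have hquad : ∀ z : Fin r → 𝕂,
      dotProduct (star z) (B *ᵥ z) =
        dotProduct (star (C *ᵥ z)) (R⁻¹ *ᵥ (C *ᵥ z)) := by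
    intro z; rw [hBC, quad_conj]
  have entry : ∀ j j' : Fin r, (Umᴴ * R * Um) j j' =
      dotProduct (star (fun i => Um i j)) (R *ᵥ (fun i => Um i j')) := by
    intro j j'
    simp only [Matrix.mul_apply, Matrix.mulVec, dotProduct, Matrix.conjTranspose_apply,
      Pi.star_apply, Finset.sum_mul, Finset.mul_sum]
    rw [Finset.sum_comm]
    exact Finset.sum_congr rfl fun i _ => Finset.sum_congr rfl fun l _ => by ring
  have hURU : Umᴴ * R * Um = 1 := by
    ext j j'
    have h0 := horth j j'
    rw [ipU, ip2, herm_dot hR1] at h0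
    rw [entry j j', h0, Matrix.one_apply]
  have hnormU : ∀ z : Fin r → 𝕂, normU R (Um *ᵥ z) = ‖eV z‖ := by
    intro z
    have key : dotProduct (star (Um *ᵥ z)) (R *ᵥ (Um *ᵥ z)) =
        dotProduct (star z) z := by
      rw [← quad_conj R Um z, hURU, Matrix.one_mulVec]
    rw [normU, ipU, ip2, herm_dot hR1, key, ← norm_eV_sq, Real.sqrt_sq (norm_nonneg _)]
  have hmem : ∀ z : Fin r → 𝕂, Um *ᵥ z ∈ Submodule.span 𝕂 {u} ⊔ UrS := by
    intro z
    apply Submodule.mem_sup_right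
    rw [← hspan]
    have hsum : Um *ᵥ z = ∑ j, z j • (fun i => Um i j) := by
      ext i; simp [Matrix.mulVec, dotProduct, Finset.sum_apply, mul_comm]
    rw [hsum]
    exact Submodule.sum_mem _ fun j _ =>
      Submodule.smul_mem _ _ (Submodule.subset_span ⟨j, rfl⟩)
  have hxne : ∀ z : Fin r → 𝕂, z ≠ 0 → Um *ᵥ z ≠ 0 := by
    intro z hz h0
    have h1 := hnormU z
    rw [h0] at h1
    have h2 : normU R (0 : Fin n → 𝕂) = 0 := by simp [normU, ipU, ip2]
    rw [h2] at h1
    exact hz (eV_eq_zero_iff.mp (norm_eq_zero.mp h1.symm))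
  have hdual : ∀ z : Fin r → 𝕂, normDual R (A *ᵥ (Um *ᵥ z)) =
      Real.sqrt (RCLike.re (dotProduct (star z) (B *ᵥ z))) := by
    intro z
    rw [normDual, ipDual, ip2, Matrix.mulVec_mulVec, ← hCdef, hquad]
  have hqnn : ∀ z : Fin r → 𝕂, 0 ≤ RCLike.re (dotProduct (star z) (B *ᵥ z)) := by
    intro z; rw [hquad]; exact hRinv.posSemidef.re_dotProduct_nonneg _
  have hBpsd : B.PosSemidef := hBC ▸ hRinv.posSemidef.conjTranspose_mul_mul_same C
  set Sset := ratioSet (Submodule.span 𝕂 {u} ⊔ UrS)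
      (fun x => normDual R (A *ᵥ x)) (normU R) with hSset
  have hbdd_below : BddBelow Sset := by
    refine ⟨0, fun t ht => ?_⟩
    obtain ⟨x, hxm, hx0, rfl⟩ := ht
    exact div_nonneg (Real.sqrt_nonneg _) (Real.sqrt_nonneg _)
  have hbdd_above : BddAbove Sset := by
    open scoped MatrixOrder in set Sq := CFC.sqrt R with hSqdef
    have hSq2 : Sq * Sq = R := open scoped MatrixOrder in CFC.sqrt_mul_sqrt_self R hR.posSemidef.nonneg
    have hSqH : Sqᴴ = Sq := (open scoped MatrixOrder in (CFC.sqrt_nonneg R).posSemidef).1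
    have hSdet : IsUnit Sq.det := by
      have h1 : IsUnit (Sq.det * Sq.det) := by
        rw [← Matrix.det_mul, hSq2]; exact hR.det_pos.ne'.isUnit
      exact isUnit_of_mul_isUnit_left h1
    have hnormU_eq : ∀ x : Fin n → 𝕂, normU R x = ‖eV (Sq *ᵥ x)‖ := by
      intro x
      have key : dotProduct (star x) (R *ᵥ x) =
          dotProduct (star (Sq *ᵥ x)) (Sq *ᵥ x) := by
        rw [herm_dot hSqH, Matrix.mulVec_mulVec, hSq2]
      rw [normU, ipU, ip2, herm_dot hR1, key, ← norm_eV_sq, Real.sqrt_sq (norm_nonneg _)]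
    have hx_le : ∀ x : Fin n → 𝕂,
        ‖eV x‖ ≤ ‖Matrix.toEuclideanCLM (𝕜 := 𝕂) Sq⁻¹‖ * normU R x := by
      intro x
      have hid : eV x = Matrix.toEuclideanCLM (𝕜 := 𝕂) Sq⁻¹ (eV (Sq *ᵥ x)) := by
        rw [clm_eV, Matrix.mulVec_mulVec, Matrix.nonsing_inv_mul _ hSdet, Matrix.one_mulVec]
      rw [hid, hnormU_eq]
      exact (Matrix.toEuclideanCLM (𝕜 := 𝕂) Sq⁻¹).le_opNorm _
    have hdual_le : ∀ w : Fin n → 𝕂, normDual R w ≤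
        Real.sqrt ‖Matrix.toEuclideanCLM (𝕜 := 𝕂) R⁻¹‖ * ‖eV w‖ := by
      intro w
      have h1 : RCLike.re (dotProduct (star w) (R⁻¹ *ᵥ w)) ≤
          ‖Matrix.toEuclideanCLM (𝕜 := 𝕂) R⁻¹‖ * ‖eV w‖ ^ 2 := by
        rw [← inner_eV w (R⁻¹ *ᵥ w)]
        calc RCLike.re (inner 𝕂 (eV w) (eV (R⁻¹ *ᵥ w))) ≤ ‖eV w‖ * ‖eV (R⁻¹ *ᵥ w)‖ :=
              re_inner_le_norm _ _
          _ = ‖eV w‖ * ‖Matrix.toEuclideanCLM (𝕜 := 𝕂) R⁻¹ (eV w)‖ := by rw [clm_eV]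
          _ ≤ ‖eV w‖ * (‖Matrix.toEuclideanCLM (𝕜 := 𝕂) R⁻¹‖ * ‖eV w‖) := by
              gcongr; exact (Matrix.toEuclideanCLM (𝕜 := 𝕂) R⁻¹).le_opNorm _
          _ = ‖Matrix.toEuclideanCLM (𝕜 := 𝕂) R⁻¹‖ * ‖eV w‖ ^ 2 := by ring
      calc normDual R w = Real.sqrt (RCLike.re (dotProduct (star w) (R⁻¹ *ᵥ w))) := by
            rw [normDual, ipDual, ip2]
        _ ≤ Real.sqrt (‖Matrix.toEuclideanCLM (𝕜 := 𝕂) R⁻¹‖ * ‖eV w‖ ^ 2) :=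
            Real.sqrt_le_sqrt h1
        _ = Real.sqrt ‖Matrix.toEuclideanCLM (𝕜 := 𝕂) R⁻¹‖ * ‖eV w‖ := by
            rw [Real.sqrt_mul (norm_nonneg _), Real.sqrt_sq (norm_nonneg _)]
    refine ⟨Real.sqrt ‖Matrix.toEuclideanCLM (𝕜 := 𝕂) R⁻¹‖ * ‖Matrix.toEuclideanCLM (𝕜 := 𝕂) A‖ *
      ‖Matrix.toEuclideanCLM (𝕜 := 𝕂) Sq⁻¹‖, ?_⟩
    rintro t ⟨x, hxm, hx0, rfl⟩
    have hUpos : 0 < normU R x := by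
      rw [normU]
      apply Real.sqrt_pos.mpr
      rw [ipU, ip2, herm_dot hR1]
      exact hR.re_dotProduct_pos hx0
    rw [div_le_iff₀ hUpos]
    calc normDual R (A *ᵥ x)
        ≤ Real.sqrt ‖Matrix.toEuclideanCLM (𝕜 := 𝕂) R⁻¹‖ * ‖eV (A *ᵥ x)‖ := hdual_le _
      _ = Real.sqrt ‖Matrix.toEuclideanCLM (𝕜 := 𝕂) R⁻¹‖ *
          ‖Matrix.toEuclideanCLM (𝕜 := 𝕂) A (eV x)‖ := by rw [clm_eV]
      _ ≤ Real.sqrt ‖Matrix.toEuclideanCLM (𝕜 := 𝕂) R⁻¹‖ *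
          (‖Matrix.toEuclideanCLM (𝕜 := 𝕂) A‖ * ‖eV x‖) := by
          gcongr
          exact (Matrix.toEuclideanCLM (𝕜 := 𝕂) A).le_opNorm _
      _ ≤ Real.sqrt ‖Matrix.toEuclideanCLM (𝕜 := 𝕂) R⁻¹‖ *
          (‖Matrix.toEuclideanCLM (𝕜 := 𝕂) A‖ *
            (‖Matrix.toEuclideanCLM (𝕜 := 𝕂) Sq⁻¹‖ * normU R x)) := by
          gcongr
          exact hx_le x
      _ = Real.sqrt ‖Matrix.toEuclideanCLM (𝕜 := 𝕂) R⁻¹‖ * ‖Matrix.toEuclideanCLM (𝕜 := 𝕂) A‖ *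
          ‖Matrix.toEuclideanCLM (𝕜 := 𝕂) Sq⁻¹‖ * normU R x := by ring
  have hmem_ratio : ∀ z : Fin r → 𝕂, z ≠ 0 →
      Real.sqrt (RCLike.re (dotProduct (star z) (B *ᵥ z))) / ‖eV z‖ ∈ Sset := by
    intro z hz
    exact ⟨Um *ᵥ z, hmem z, hxne z hz, by simp only [hdual z, hnormU z]⟩
  have hι0 : 0 ≤ ι := by
    obtain ⟨x, hxm, hx0⟩ := Submodule.ne_bot_iff UrS |>.mp hUrS
    have ht : (normDual R (A *ᵥ x) / normU R x) ∈ Sset :=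
      ⟨x, Submodule.mem_sup_right hxm, hx0, rfl⟩
    have h0 : (0 : ℝ) ≤ normDual R (A *ᵥ x) / normU R x :=
      div_nonneg (Real.sqrt_nonneg _) (Real.sqrt_nonneg _)
    rw [hι]
    exact h0.trans (le_csSup hbdd_above ht)
  have hupper : ∀ z : Fin r → 𝕂,
      RCLike.re (dotProduct (star z) (B *ᵥ z)) ≤ ι ^ 2 * ‖eV z‖ ^ 2 := by
    intro z
    rcases eq_or_ne z 0 with rfl | hz
    · simp [eV_zero]
    · have hzn : 0 < ‖eV z‖ := norm_pos_iff.mpr fun hh => hz (eV_eq_zero_iff.mp hh)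
      have hle : Real.sqrt (RCLike.re (dotProduct (star z) (B *ᵥ z))) / ‖eV z‖ ≤ ι :=
        hι ▸ le_csSup hbdd_above (hmem_ratio z hz)
      rw [div_le_iff₀ hzn] at hle
      have h3 := Real.sq_sqrt (hqnn z)
      have h4 := mul_le_mul hle hle (Real.sqrt_nonneg _) (by positivity)
      nlinarith [h4, h3]
  have hlower : ∀ z : Fin r → 𝕂,
      ζ ^ 2 * ‖eV z‖ ^ 2 ≤ RCLike.re (dotProduct (star z) (B *ᵥ z)) := by
    intro z
    rcases eq_or_ne z 0 with rfl | hz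
    · simp [eV_zero]
    · have hzn : 0 < ‖eV z‖ := norm_pos_iff.mpr fun hh => hz (eV_eq_zero_iff.mp hh)
      have hle : ζ ≤ Real.sqrt (RCLike.re (dotProduct (star z) (B *ᵥ z))) / ‖eV z‖ :=
        hζ ▸ csInf_le hbdd_below (hmem_ratio z hz)
      rw [le_div_iff₀ hzn] at hle
      have h3 := Real.sq_sqrt (hqnn z)
      have h4 := mul_le_mul hle hle (by positivity) (Real.sqrt_nonneg _)
      nlinarith [h4, h3]
  obtain ⟨hBpd, hinv_le⟩ := posDef_and_inv_norm_le_of_quad hBpsd hζpos hlower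
  have h1 := opNorm_le_of_quad hBpsd hι0 hupper
  refine ⟨(Matrix.isUnit_iff_isUnit_det B).mp hBpd.isUnit, ?_⟩
  calc ‖Matrix.toEuclideanCLM (𝕜 := 𝕂) B‖ * ‖Matrix.toEuclideanCLM (𝕜 := 𝕂) B⁻¹‖
      ≤ ι ^ 2 * (ζ ^ 2)⁻¹ := mul_le_mul h1 hinv_le (norm_nonneg _) (by positivity)
    _ = (ι / ζ) ^ 2 := by rw [div_pow, div_eq_mul_inv]

end
end

section
/- Preservation of the minres quasi-optimality constants under sketching: let R_r(U_r) := span{R_U⁻¹(b − A x) : x ∈ U_r}. If 0 ≤ ε < 1 and Θ is an ε-embedding for R_r(U_r), then √(1−ε)·ζ_r ≤ ζ_r^Θ ≤ √(1+ε)·ζ_r and √(1−ε)·ι_r ≤ ι_r^Θ ≤ √(1+ε)·ι_r. -/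
open Matrix
open scoped ComplexOrder

noncomputable section

variable {𝕂 : Type*} [RCLike 𝕂]

section psqrt
open scoped MatrixOrder
lemma Matrix.PosSemidef.exists_sqrt' {n : ℕ} {R : Matrix (Fin n) (Fin n) 𝕂}
    (hR : R.PosSemidef) : ∃ X : Matrix (Fin n) (Fin n) 𝕂, IsSelfAdjoint X ∧ X * X = R := by
  obtain ⟨X, hX, -, h⟩ := CFC.exists_sqrt_of_isSelfAdjoint_of_quasispectrumRestricts
    hR.isHermitian (QuasispectrumRestricts.nnreal_of_nonneg hR.nonneg)
  exact ⟨X, hX, h⟩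
end psqrt

def Matrix.PosSemidef.sqrt {n : ℕ} {R : Matrix (Fin n) (Fin n) 𝕂} (hR : R.PosSemidef) :
    Matrix (Fin n) (Fin n) 𝕂 := Classical.choose hR.exists_sqrt'

lemma Matrix.PosSemidef.posSemidef_sqrt {n : ℕ} {R : Matrix (Fin n) (Fin n) 𝕂}
    (hR : R.PosSemidef) : IsSelfAdjoint hR.sqrt := (Classical.choose_spec hR.exists_sqrt').1

lemma Matrix.PosSemidef.sqrt_mul_self {n : ℕ} {R : Matrix (Fin n) (Fin n) 𝕂}
    (hR : R.PosSemidef) : hR.sqrt * hR.sqrt = R := (Classical.choose_spec hR.exists_sqrt').2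

namespace SketchAux

lemma re_ip2_self {n : ℕ} (x : Fin n → 𝕂) : RCLike.re (ip2 x x) = ∑ i, ‖x i‖ ^ 2 := by
  rw [ip2, dotProduct, map_sum]
  refine Finset.sum_congr rfl fun i _ => ?_
  rw [Pi.star_apply, RCLike.star_def, RCLike.conj_mul, ← RCLike.ofReal_pow, RCLike.ofReal_re]

lemma re_ip2_self_nonneg {n : ℕ} (x : Fin n → 𝕂) : 0 ≤ RCLike.re (ip2 x x) := by
  rw [re_ip2_self]; positivity

lemma norm2_eq {n : ℕ} (x : Fin n → 𝕂) : norm2 x = ‖(WithLp.equiv 2 (Fin n → 𝕂)).symm x‖ := by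
  rw [EuclideanSpace.norm_eq, norm2, re_ip2_self]
  simp [WithLp.equiv_symm_apply]

lemma ip2_sq_mulVec {n : ℕ} (S : Matrix (Fin n) (Fin n) 𝕂) (x : Fin n → 𝕂) :
    ip2 ((Sᴴ * S) *ᵥ x) x = ip2 (S *ᵥ x) (S *ᵥ x) := by
  simp only [ip2, star_mulVec, conjTranspose_mul, conjTranspose_conjTranspose,
    Matrix.dotProduct_mulVec, vecMul_vecMul]

lemma ip2_sq_mulVec' {n : ℕ} (S : Matrix (Fin n) (Fin n) 𝕂) (x : Fin n → 𝕂) :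
    ip2 x ((Sᴴ * S) *ᵥ x) = ip2 (S *ᵥ x) (S *ᵥ x) := by
  rw [← mulVec_mulVec]
  simp only [ip2, star_mulVec, Matrix.dotProduct_mulVec]

section opn
open scoped Matrix.Norms.L2Operator
lemma norm2_mulVec_le {n : ℕ} (M : Matrix (Fin n) (Fin n) 𝕂) :
    ∃ C : ℝ, 0 ≤ C ∧ ∀ y : Fin n → 𝕂, norm2 (M *ᵥ y) ≤ C * norm2 y := by
  refine ⟨‖M‖, norm_nonneg _, fun y => ?_⟩
  rw [norm2_eq, norm2_eq]
  exact M.l2_opNorm_mulVec ((WithLp.equiv 2 (Fin n → 𝕂)).symm y)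
end opn

lemma norm2_pos {n : ℕ} {x : Fin n → 𝕂} (hx : x ≠ 0) : 0 < norm2 x := by
  rw [norm2_eq]; simpa using hx

lemma norm2_nonneg {n : ℕ} (x : Fin n → 𝕂) : 0 ≤ norm2 x := Real.sqrt_nonneg _

variable {n k : ℕ} {R A : Matrix (Fin n) (Fin n) 𝕂}

lemma sq_eq (hR : R.PosDef) :
    (hR.posSemidef.sqrt)ᴴ * hR.posSemidef.sqrt = R := by
  rw [hR.posSemidef.posSemidef_sqrt.isHermitian, hR.posSemidef.sqrt_mul_self]

lemma normU_eq (hR : R.PosDef) (x : Fin n → 𝕂) :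
    normU R x = norm2 (hR.posSemidef.sqrt *ᵥ x) := by
  have h := ip2_sq_mulVec (hR.posSemidef.sqrt) x
  rw [sq_eq hR] at h
  rw [normU, ipU, norm2, h]

lemma sqrt_isUnit_det (hR : R.PosDef) : IsUnit (hR.posSemidef.sqrt).det := by
  have h : IsUnit R.det := hR.isUnit.map (Matrix.detMonoidHom)
  rw [← hR.posSemidef.sqrt_mul_self, det_mul] at h
  exact isUnit_of_mul_isUnit_left h

lemma normU_pos (hR : R.PosDef) {x : Fin n → 𝕂} (hx : x ≠ 0) : 0 < normU R x := by
  rw [normU_eq hR]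
  refine norm2_pos fun h => hx ?_
  have := congrArg (fun y => (hR.posSemidef.sqrt)⁻¹ *ᵥ y) h
  simpa [mulVec_mulVec, nonsing_inv_mul _ (sqrt_isUnit_det hR)] using this

lemma normU_nonneg (x : Fin n → 𝕂) : 0 ≤ normU R x := Real.sqrt_nonneg _

lemma normDual_eq (hR : R.PosDef) (y : Fin n → 𝕂) :
    normDual R y = norm2 ((hR.inv.posSemidef.sqrt) *ᵥ y) := by
  have h := ip2_sq_mulVec' (hR.inv.posSemidef.sqrt) y
  rw [sq_eq hR.inv] at h
  rw [normDual, ipDual, norm2, h]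

/-- Boundedness of the Rayleigh-type quotient. -/
lemma exists_ratio_bound (hR : R.PosDef) (A : Matrix (Fin n) (Fin n) 𝕂) :
    ∃ C : ℝ, 0 ≤ C ∧ ∀ x : Fin n → 𝕂, normDual R (A *ᵥ x) ≤ C * normU R x := by
  set S := hR.posSemidef.sqrt with hS
  set B := hR.inv.posSemidef.sqrt with hB
  obtain ⟨C, hC0, hC⟩ := norm2_mulVec_le (𝕂 := 𝕂) (B * A * S⁻¹)
  refine ⟨C, hC0, fun x => ?_⟩
  rw [normDual_eq hR, normU_eq hR]
  have hx : (B * A * S⁻¹) *ᵥ (S *ᵥ x) = B *ᵥ (A *ᵥ x) := by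
    rw [mulVec_mulVec, Matrix.mul_assoc (B * A) S⁻¹ S,
      nonsing_inv_mul _ (sqrt_isUnit_det hR), Matrix.mul_one, mulVec_mulVec]
  simpa [hx] using hC (S *ᵥ x)

lemma re_ipU_self (hR : R.PosDef) (v : Fin n → 𝕂) :
    RCLike.re (ipU R v v) = (normU R v) ^ 2 := by
  have h := ip2_sq_mulVec (hR.posSemidef.sqrt) v
  rw [sq_eq hR] at h
  rw [ipU, h, normU_eq hR, norm2, Real.sq_sqrt (re_ip2_self_nonneg _)]

lemma re_ipUS_self (Θ : Matrix (Fin k) (Fin n) 𝕂) (v : Fin n → 𝕂) :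
    RCLike.re (ipUS Θ v v) = (normUS Θ v) ^ 2 := by
  rw [normUS, Real.sq_sqrt]
  exact re_ip2_self_nonneg _

lemma normUS_nonneg (Θ : Matrix (Fin k) (Fin n) 𝕂) (v : Fin n → 𝕂) : 0 ≤ normUS Θ v :=
  Real.sqrt_nonneg _

lemma Rdet (hR : R.PosDef) : IsUnit R.det := hR.isUnit.map Matrix.detMonoidHom

lemma normDual_eq_normU_inv (hR : R.PosDef) (y : Fin n → 𝕂) :
    normDual R y = normU R (R⁻¹ *ᵥ y) := by
  rw [normDual, normU, ipU, mulVec_mulVec, mul_nonsing_inv _ (Rdet hR), one_mulVec, ipDual]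

lemma emb_bounds {k : ℕ} {Θ : Matrix (Fin k) (Fin n) 𝕂} {V : Submodule 𝕂 (Fin n → 𝕂)}
    {ε : ℝ} (hR : R.PosDef) (hemb : IsEmb R Θ V ε) (hε0 : 0 ≤ ε) (hε1 : ε ≤ 1)
    {v : Fin n → 𝕂} (hv : v ∈ V) :
    Real.sqrt (1 - ε) * normU R v ≤ normUS Θ v ∧
      normUS Θ v ≤ Real.sqrt (1 + ε) * normU R v := by
  have h := hemb v hv v hv
  set N := normU R v with hN
  set NΘ := normUS Θ v with hNT
  have hre : |N ^ 2 - NΘ ^ 2| ≤ ε * N ^ 2 := by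
    calc |N ^ 2 - NΘ ^ 2| = |RCLike.re (ipU R v v - ipUS Θ v v)| := by
          rw [map_sub, re_ipU_self hR, re_ipUS_self]
      _ ≤ ‖ipU R v v - ipUS Θ v v‖ := RCLike.abs_re_le_norm _
      _ ≤ ε * N * N := h
      _ = ε * N ^ 2 := by ring
  have h1 : (1 - ε) * N ^ 2 ≤ NΘ ^ 2 := by
    have := abs_le.mp hre
    nlinarith [this.2]
  have h2 : NΘ ^ 2 ≤ (1 + ε) * N ^ 2 := by
    have := abs_le.mp hre
    nlinarith [this.1]
  have hNn : 0 ≤ N := normU_nonneg v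
  have hNTn : 0 ≤ NΘ := normUS_nonneg Θ v
  constructor
  · have := Real.sqrt_le_sqrt h1
    rwa [Real.sqrt_mul (by linarith : (0:ℝ) ≤ 1 - ε), Real.sqrt_sq hNn,
      Real.sqrt_sq hNTn] at this
  · have := Real.sqrt_le_sqrt h2
    rwa [Real.sqrt_mul (by linarith : (0:ℝ) ≤ 1 + ε), Real.sqrt_sq hNn,
      Real.sqrt_sq hNTn] at this

lemma mem_Rr (hA : IsUnit A.det) {b u : Fin n → 𝕂} (hu : u = A⁻¹ *ᵥ b)
    {Ur : Submodule 𝕂 (Fin n → 𝕂)} {x : Fin n → 𝕂}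
    (hx : x ∈ Submodule.span 𝕂 {u} ⊔ Ur) :
    R⁻¹ *ᵥ (A *ᵥ x) ∈ RrSub R A b Ur := by
  obtain ⟨y, hy, z, hz, rfl⟩ := Submodule.mem_sup.mp hx
  obtain ⟨c, rfl⟩ := Submodule.mem_span_singleton.mp hy
  have hAu : A *ᵥ u = b := by
    rw [hu, mulVec_mulVec, mul_nonsing_inv _ hA, one_mulVec]
  have hg0 : R⁻¹ *ᵥ b ∈ RrSub R A b Ur := by
    refine Submodule.subset_span ⟨0, Ur.zero_mem, ?_⟩
    rw [mulVec_zero, sub_zero]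
  have hgz : R⁻¹ *ᵥ (b - A *ᵥ z) ∈ RrSub R A b Ur :=
    Submodule.subset_span ⟨z, hz, rfl⟩
  have key : R⁻¹ *ᵥ (A *ᵥ (c • u + z)) =
      (c + 1) • (R⁻¹ *ᵥ b) - R⁻¹ *ᵥ (b - A *ᵥ z) := by
    rw [← mulVec_smul, ← mulVec_sub]
    refine congrArg (fun w => R⁻¹ *ᵥ w) ?_
    rw [mulVec_add, mulVec_smul, hAu]
    module
  rw [key]
  exact Submodule.sub_mem _ (Submodule.smul_mem _ _ hg0) hgz

end SketchAux

open SketchAux in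
/-- Preservation of the minres quasi-optimality constants under sketching. -/
theorem sketched_minres_constants_preservation {𝕂 : Type*} [RCLike 𝕂] {n k : ℕ}
    (R A : Matrix (Fin n) (Fin n) 𝕂) (hR : R.PosDef) (hA : IsUnit A.det)
    (Θ : Matrix (Fin k) (Fin n) 𝕂)
    (b u : Fin n → 𝕂) (hu : u = A⁻¹ *ᵥ b)
    (Ur : Submodule 𝕂 (Fin n → 𝕂)) (hUr : Ur ≠ ⊥)
    (ε : ℝ) (hε0 : 0 ≤ ε) (hε1 : ε < 1)
    (hemb : IsEmb R Θ (RrSub R A b Ur) ε)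
    (ζ ι ζΘ ιΘ : ℝ)
    (hζ : ζ = sInf (ratioSet (Submodule.span 𝕂 {u} ⊔ Ur)
        (fun x => normDual R (A *ᵥ x)) (normU R)))
    (hι : ι = sSup (ratioSet (Submodule.span 𝕂 {u} ⊔ Ur)
        (fun x => normDual R (A *ᵥ x)) (normU R)))
    (hζΘ : ζΘ = sInf (ratioSet (Submodule.span 𝕂 {u} ⊔ Ur)
        (fun x => normDualS Θ R (A *ᵥ x)) (normU R)))
    (hιΘ : ιΘ = sSup (ratioSet (Submodule.span 𝕂 {u} ⊔ Ur)
        (fun x => normDualS Θ R (A *ᵥ x)) (normU R))) :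
    Real.sqrt (1 - ε) * ζ ≤ ζΘ ∧ ζΘ ≤ Real.sqrt (1 + ε) * ζ ∧
      Real.sqrt (1 - ε) * ι ≤ ιΘ ∧ ιΘ ≤ Real.sqrt (1 + ε) * ι := by
  set T : Submodule 𝕂 (Fin n → 𝕂) := Submodule.span 𝕂 {u} ⊔ Ur with hT
  set f : (Fin n → 𝕂) → ℝ := fun x => normDual R (A *ᵥ x) with hf
  set fΘ : (Fin n → 𝕂) → ℝ := fun x => normDualS Θ R (A *ᵥ x) with hfΘ
  set g : (Fin n → 𝕂) → ℝ := normU R with hg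
  set cm : ℝ := Real.sqrt (1 - ε) with hcm
  set cp : ℝ := Real.sqrt (1 + ε) with hcp
  have hcm_pos : 0 < cm := Real.sqrt_pos.mpr (by linarith)
  have hcp_pos : 0 < cp := Real.sqrt_pos.mpr (by linarith)
  set Ss : Set ℝ := ratioSet T f g with hSs
  set Ss' : Set ℝ := ratioSet T fΘ g with hSs'
  -- pointwise bounds
  have hpt : ∀ x ∈ T, cm * f x ≤ fΘ x ∧ fΘ x ≤ cp * f x := by
    intro x hx
    have hv : R⁻¹ *ᵥ (A *ᵥ x) ∈ RrSub R A b Ur := mem_Rr hA hu hx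
    have hb' := emb_bounds hR hemb hε0 hε1.le hv
    have h1 : normU R (R⁻¹ *ᵥ (A *ᵥ x)) = f x := (normDual_eq_normU_inv hR _).symm
    have h2 : normUS Θ (R⁻¹ *ᵥ (A *ᵥ x)) = fΘ x := rfl
    rw [h1, h2] at hb'
    exact hb'
  have hf_nonneg : ∀ x, 0 ≤ f x := fun x => Real.sqrt_nonneg _
  have hfΘ_nonneg : ∀ x, 0 ≤ fΘ x := fun x => Real.sqrt_nonneg _
  have hg_nonneg : ∀ x, 0 ≤ g x := fun x => Real.sqrt_nonneg _
  have hg_pos : ∀ x : Fin n → 𝕂, x ≠ 0 → 0 < g x := fun x hx => normU_pos hR hx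
  -- nonemptiness
  obtain ⟨x₀, hx₀U, hx₀⟩ := Submodule.exists_mem_ne_zero_of_ne_bot hUr
  have hx₀T : x₀ ∈ T := (le_sup_right : Ur ≤ T) hx₀U
  have hne : Ss.Nonempty := ⟨f x₀ / g x₀, x₀, hx₀T, hx₀, rfl⟩
  have hne' : Ss'.Nonempty := ⟨fΘ x₀ / g x₀, x₀, hx₀T, hx₀, rfl⟩
  -- bounded below by 0
  have hbb : BddBelow Ss := by
    refine ⟨0, ?_⟩; rintro t ⟨x, hx, hx0, rfl⟩
    exact div_nonneg (hf_nonneg x) (hg_nonneg x)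
  have hbb' : BddBelow Ss' := by
    refine ⟨0, ?_⟩; rintro t ⟨x, hx, hx0, rfl⟩
    exact div_nonneg (hfΘ_nonneg x) (hg_nonneg x)
  -- bounded above
  obtain ⟨C, hC0, hC⟩ := exists_ratio_bound hR A
  have hba : BddAbove Ss := by
    refine ⟨C, ?_⟩; rintro t ⟨x, hx, hx0, rfl⟩
    exact (div_le_iff₀ (hg_pos x hx0)).mpr (hC x)
  have hba' : BddAbove Ss' := by
    refine ⟨cp * C, ?_⟩; rintro t ⟨x, hx, hx0, rfl⟩
    refine (div_le_iff₀ (hg_pos x hx0)).mpr ?_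
    calc fΘ x ≤ cp * f x := (hpt x hx).2
      _ ≤ cp * (C * g x) := by
          exact mul_le_mul_of_nonneg_left (hC x) hcp_pos.le
      _ = cp * C * g x := by ring
  refine ⟨?_, ?_, ?_, ?_⟩
  · -- cm * ζ ≤ ζΘ
    rw [hζ, hζΘ]
    refine le_csInf hne' ?_
    rintro t ⟨x, hx, hx0, rfl⟩
    have hgx := hg_pos x hx0
    calc cm * sInf Ss ≤ cm * (f x / g x) :=
          mul_le_mul_of_nonneg_left (csInf_le hbb ⟨x, hx, hx0, rfl⟩) hcm_pos.le
      _ = cm * f x / g x := (mul_div_assoc _ _ _).symm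
      _ ≤ fΘ x / g x := (div_le_div_iff_of_pos_right hgx).mpr (hpt x hx).1
  · -- ζΘ ≤ cp * ζ
    rw [hζ, hζΘ]
    have key : sInf Ss' / cp ≤ sInf Ss := by
      refine le_csInf hne ?_
      rintro t ⟨x, hx, hx0, rfl⟩
      have hgx := hg_pos x hx0
      refine (div_le_iff₀ hcp_pos).mpr ?_
      calc sInf Ss' ≤ fΘ x / g x := csInf_le hbb' ⟨x, hx, hx0, rfl⟩
        _ ≤ cp * f x / g x := (div_le_div_iff_of_pos_right hgx).mpr (hpt x hx).2
        _ = f x / g x * cp := by ring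
    have := (div_le_iff₀ hcp_pos).mp key
    linarith [this]
  · -- cm * ι ≤ ιΘ
    rw [hι, hιΘ]
    have key : sSup Ss ≤ sSup Ss' / cm := by
      refine csSup_le hne ?_
      rintro t ⟨x, hx, hx0, rfl⟩
      have hgx := hg_pos x hx0
      refine (le_div_iff₀ hcm_pos).mpr ?_
      calc f x / g x * cm = cm * f x / g x := by ring
        _ ≤ fΘ x / g x := (div_le_div_iff_of_pos_right hgx).mpr (hpt x hx).1
        _ ≤ sSup Ss' := le_csSup hba' ⟨x, hx, hx0, rfl⟩
    have := (le_div_iff₀ hcm_pos).mp key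
    linarith [this]
  · -- ιΘ ≤ cp * ι
    rw [hι, hιΘ]
    refine csSup_le hne' ?_
    rintro t ⟨x, hx, hx0, rfl⟩
    have hgx := hg_pos x hx0
    calc fΘ x / g x ≤ cp * f x / g x := (div_le_div_iff_of_pos_right hgx).mpr (hpt x hx).2
      _ = cp * (f x / g x) := mul_div_assoc _ _ _
      _ ≤ cp * sSup Ss := mul_le_mul_of_nonneg_left (le_csSup hba ⟨x, hx, hx0, rfl⟩) hcp_pos.le

end
end

section
/- Conditioning of the sketched minres least-squares matrix: suppose 0 ≤ ε < 1, Θ is an ε-embedding for U_r, ζ_r^Θ > 0, and the columns of the matrix U_r ∈ 𝕂^{n×r} form a basis of the subspace U_r that is orthonormal with respect to ⟨·,·⟩_U^Θ. Then the matrix V_r^Θ := Θ R_U⁻¹ A U_r has full column rank and its condition number (ratio of its largest to its smallest singular value) is at most √((1+ε)/(1−ε)) · (ι_r^Θ/ζ_r^Θ). -/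
open Matrix
open scoped ComplexOrder

noncomputable section

variable {𝕂 : Type*} [RCLike 𝕂]

-- auxiliary lemmas
lemma ipU_eq' {n : ℕ} (R : Matrix (Fin n) (Fin n) 𝕂) (hR : R.IsHermitian) (x : Fin n → 𝕂) :
    ipU R x x = star x ⬝ᵥ (R *ᵥ x) := by
  rw [ipU, ip2, star_mulVec, ← Matrix.dotProduct_mulVec, hR.eq]

lemma norm2_eq_sum' {m : ℕ} (x : Fin m → 𝕂) :
    norm2 x = Real.sqrt (∑ i, ‖x i‖ ^ 2) := by
  rw [norm2, ip2, dotProduct]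
  congr 1
  rw [map_sum]
  congr 1; funext i
  have : star x i * x i = (starRingEnd 𝕂) (x i) * x i := rfl
  rw [this, RCLike.conj_mul, ← RCLike.ofReal_pow, RCLike.ofReal_re]

lemma norm2_nonneg' {m : ℕ} (x : Fin m → 𝕂) : 0 ≤ norm2 x := Real.sqrt_nonneg _

lemma norm2_pos' {m : ℕ} {x : Fin m → 𝕂} (hx : x ≠ 0) : 0 < norm2 x := by
  rw [norm2_eq_sum']
  apply Real.sqrt_pos.mpr
  obtain ⟨i, hi⟩ := Function.ne_iff.mp hx
  have hi' : (0:ℝ) < ‖x i‖ ^ 2 := pow_pos (norm_pos_iff.mpr hi) 2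
  exact Finset.sum_pos' (fun j _ => by positivity) ⟨i, Finset.mem_univ i, hi'⟩

lemma normU_pos' {n : ℕ} {R : Matrix (Fin n) (Fin n) 𝕂} (hR : R.PosDef) {x : Fin n → 𝕂}
    (hx : x ≠ 0) : 0 < normU R x := by
  rw [normU, ipU_eq' R hR.isHermitian]
  exact Real.sqrt_pos.mpr (hR.re_dotProduct_pos hx)

lemma normU_nonneg' {n : ℕ} (R : Matrix (Fin n) (Fin n) 𝕂) (x : Fin n → 𝕂) :
    0 ≤ normU R x := Real.sqrt_nonneg _

lemma normUS_eq_norm2' {n k : ℕ} (Θ : Matrix (Fin k) (Fin n) 𝕂) (x : Fin n → 𝕂) :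
    normUS Θ x = norm2 (Θ *ᵥ x) := rfl

def ErT (𝕂 : Type*) (n : ℕ) : Type _ := Fin n → 𝕂

lemma mulVec_le_bound' {n k : ℕ} (R : Matrix (Fin n) (Fin n) 𝕂) (hR : R.PosDef)
    (M : Matrix (Fin k) (Fin n) 𝕂) :
    ∃ C : ℝ, ∀ x : Fin n → 𝕂, norm2 (M *ᵥ x) ≤ C * normU R x := by
  letI instN : NormedAddCommGroup (ErT 𝕂 n) := Matrix.toNormedAddCommGroup R hR
  letI instI : InnerProductSpace 𝕂 (ErT 𝕂 n) := Matrix.toInnerProductSpace R hR.posSemidef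
  letI instF : FiniteDimensional 𝕂 (ErT 𝕂 n) :=
    inferInstanceAs (FiniteDimensional 𝕂 (Fin n → 𝕂))
  have hnorm : ∀ x : Fin n → 𝕂, @norm (ErT 𝕂 n) instN.toNorm x = normU R x := by
    intro x
    rw [normU, ipU_eq' R hR.isHermitian, dotProduct_comm]
    rfl
  let f : ErT 𝕂 n →ₗ[𝕂] EuclideanSpace 𝕂 (Fin k) :=
    (WithLp.linearEquiv 2 𝕂 (Fin k → 𝕂)).symm.toLinearMap ∘ₗ M.mulVecLin
  let g := LinearMap.toContinuousLinearMap f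
  refine ⟨‖g‖, fun x => ?_⟩
  have h1 := g.le_opNorm x
  rw [hnorm x] at h1
  have h2 : ‖g x‖ = norm2 (M *ᵥ x) := by
    rw [norm2_eq_sum', EuclideanSpace.norm_eq]
    rfl
  rw [← h2]; exact h1

-- auxiliary extras
lemma re_ip2_self {m : ℕ} (x : Fin m → 𝕂) :
    RCLike.re (ip2 x x) = ∑ i, ‖x i‖ ^ 2 := by
  rw [ip2, dotProduct, map_sum]
  congr 1; funext i
  have : star x i * x i = (starRingEnd 𝕂) (x i) * x i := rfl
  rw [this, RCLike.conj_mul, ← RCLike.ofReal_pow, RCLike.ofReal_re]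

lemma normDualS_nonneg' {n k : ℕ} (Θ : Matrix (Fin k) (Fin n) 𝕂)
    (R : Matrix (Fin n) (Fin n) 𝕂) (y : Fin n → 𝕂) : 0 ≤ normDualS Θ R y :=
  Real.sqrt_nonneg _

/-- Conditioning of the sketched minres least-squares matrix. -/
theorem sketched_minres_matrix_conditioning {𝕂 : Type*} [RCLike 𝕂] {n k r : ℕ}
    (R A : Matrix (Fin n) (Fin n) 𝕂) (hR : R.PosDef) (hA : IsUnit A.det)
    (Θ : Matrix (Fin k) (Fin n) 𝕂)
    (b u : Fin n → 𝕂) (hu : u = A⁻¹ *ᵥ b)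
    (UrS : Submodule 𝕂 (Fin n → 𝕂)) (hUrS : UrS ≠ ⊥)
    (ε : ℝ) (hε0 : 0 ≤ ε) (hε1 : ε < 1)
    (hemb : IsEmb R Θ UrS ε)
    (Um : Matrix (Fin n) (Fin r) 𝕂)
    (hspan : Submodule.span 𝕂 (Set.range fun j : Fin r => fun i => Um i j) = UrS)
    (horth : ∀ j j' : Fin r,
      ipUS Θ (fun i => Um i j) (fun i => Um i j') = if j = j' then 1 else 0)
    (ζΘ ιΘ : ℝ)
    (hζ : ζΘ = sInf (ratioSet (Submodule.span 𝕂 {u} ⊔ UrS)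
        (fun x => normDualS Θ R (A *ᵥ x)) (normU R)))
    (hι : ιΘ = sSup (ratioSet (Submodule.span 𝕂 {u} ⊔ UrS)
        (fun x => normDualS Θ R (A *ᵥ x)) (normU R)))
    (hζpos : 0 < ζΘ)
    (σmin σmax : ℝ)
    (hσmin : σmin = sInf {t | ∃ x : Fin r → 𝕂, x ≠ 0 ∧
        t = norm2 ((Θ * R⁻¹ * A * Um) *ᵥ x) / norm2 x})
    (hσmax : σmax = sSup {t | ∃ x : Fin r → 𝕂, x ≠ 0 ∧
        t = norm2 ((Θ * R⁻¹ * A * Um) *ᵥ x) / norm2 x}) :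
    Matrix.rank (Θ * R⁻¹ * A * Um) = r ∧
      σmax / σmin ≤ Real.sqrt ((1 + ε) / (1 - ε)) * (ιΘ / ζΘ) := by
  -- Gram matrix identity
  have hG : ((Θ * Um)ᴴ * (Θ * Um)) = (1 : Matrix (Fin r) (Fin r) 𝕂) := by
    ext j j'
    have h := horth j j'
    simp only [ipUS, ip2, Matrix.mul_apply, Matrix.conjTranspose_apply, dotProduct,
      Matrix.mulVec, Pi.star_apply, Matrix.one_apply] at h ⊢
    convert h using 1
  have key1 : ∀ x y : Fin r → 𝕂, ipUS Θ (Um *ᵥ x) (Um *ᵥ y) = ip2 x y := by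
    intro x y
    rw [ipUS, ip2, Matrix.mulVec_mulVec, Matrix.mulVec_mulVec, star_mulVec,
      ← Matrix.dotProduct_mulVec, Matrix.mulVec_mulVec, hG, Matrix.one_mulVec]
    rfl
  have key2 : ∀ x : Fin r → 𝕂, normUS Θ (Um *ᵥ x) = norm2 x := by
    intro x; rw [normUS, key1]; rfl
  have hUmmem : ∀ x : Fin r → 𝕂, Um *ᵥ x ∈ UrS := by
    intro x
    have hcol : ∀ j, (fun i => Um i j) ∈ UrS := by
      intro j
      have hmem : (fun i => Um i j) ∈ Submodule.span 𝕂
          (Set.range fun j : Fin r => fun i => Um i j) :=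
        Submodule.subset_span ⟨j, rfl⟩
      rwa [hspan] at hmem
    have hdecomp : Um *ᵥ x = ∑ j, x j • (fun i => Um i j) := by
      funext i
      simp [Matrix.mulVec, dotProduct, Finset.sum_apply, mul_comm]
    rw [hdecomp]
    exact Submodule.sum_mem _ fun j _ => Submodule.smul_mem _ _ (hcol j)
  have hUminj : ∀ x : Fin r → 𝕂, Um *ᵥ x = 0 → x = 0 := by
    intro x hx
    by_contra hxne
    have h1 := key2 x
    rw [hx] at h1
    have h2 : normUS Θ (0 : Fin n → 𝕂) = 0 := by
      simp [normUS, ipUS, ip2]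
    rw [h2] at h1
    exact absurd h1.symm (ne_of_gt (norm2_pos' hxne))
  have hND : ∀ w : Fin n → 𝕂, normDualS Θ R (A *ᵥ w) = norm2 ((Θ * R⁻¹ * A) *ᵥ w) := by
    intro w
    rw [normDualS, normUS_eq_norm2', Matrix.mulVec_mulVec, Matrix.mulVec_mulVec]
  have hVx : ∀ x : Fin r → 𝕂, (Θ * R⁻¹ * A * Um) *ᵥ x = (Θ * R⁻¹ * A) *ᵥ (Um *ᵥ x) :=
    fun x => (Matrix.mulVec_mulVec x (Θ * R⁻¹ * A) Um).symm
  -- embedding bounds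
  have hemb2 : ∀ v ∈ UrS, Real.sqrt (1-ε) * normU R v ≤ normUS Θ v ∧
      normUS Θ v ≤ Real.sqrt (1+ε) * normU R v := by
    intro v hv
    have h := hemb v hv v hv
    have ha0 : 0 ≤ RCLike.re (ipU R v v) := by
      rw [ipU_eq' R hR.isHermitian]; exact hR.posSemidef.re_dotProduct_nonneg v
    have hs0 : 0 ≤ RCLike.re (ipUS Θ v v) := by
      rw [ipUS, re_ip2_self]; positivity
    have hmm : normU R v * normU R v = RCLike.re (ipU R v v) := by
      rw [normU]; exact Real.mul_self_sqrt ha0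
    have habs : |RCLike.re (ipU R v v) - RCLike.re (ipUS Θ v v)| ≤
        ε * RCLike.re (ipU R v v) := by
      calc |RCLike.re (ipU R v v) - RCLike.re (ipUS Θ v v)|
          = |RCLike.re (ipU R v v - ipUS Θ v v)| := by rw [map_sub]
        _ ≤ ‖ipU R v v - ipUS Θ v v‖ := RCLike.abs_re_le_norm _
        _ ≤ ε * normU R v * normU R v := h
        _ = ε * RCLike.re (ipU R v v) := by rw [mul_assoc, hmm]
    obtain ⟨h3, h4⟩ := abs_le.mp habs
    constructor
    · have h5 : (1-ε) * RCLike.re (ipU R v v) ≤ RCLike.re (ipUS Θ v v) := by linarith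
      calc Real.sqrt (1-ε) * normU R v
          = Real.sqrt ((1-ε) * RCLike.re (ipU R v v)) := by
            rw [normU, Real.sqrt_mul (by linarith : (0:ℝ) ≤ 1-ε)]
        _ ≤ Real.sqrt (RCLike.re (ipUS Θ v v)) := Real.sqrt_le_sqrt h5
        _ = normUS Θ v := rfl
    · have h5 : RCLike.re (ipUS Θ v v) ≤ (1+ε) * RCLike.re (ipU R v v) := by linarith
      calc normUS Θ v = Real.sqrt (RCLike.re (ipUS Θ v v)) := rfl
        _ ≤ Real.sqrt ((1+ε) * RCLike.re (ipU R v v)) := Real.sqrt_le_sqrt h5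
        _ = Real.sqrt (1+ε) * normU R v := by
            rw [normU, Real.sqrt_mul (by linarith : (0:ℝ) ≤ 1+ε)]
  -- bounds for the ratio set
  obtain ⟨C, hC⟩ := mulVec_le_bound' R hR (Θ * R⁻¹ * A)
  have hBddA : BddAbove (ratioSet (Submodule.span 𝕂 {u} ⊔ UrS)
      (fun x => normDualS Θ R (A *ᵥ x)) (normU R)) := by
    refine ⟨max C 0, fun t ht => ?_⟩
    obtain ⟨x, hx, hxne, rfl⟩ := ht
    have hpos := normU_pos' hR hxne
    show normDualS Θ R (A *ᵥ x) / normU R x ≤ max C 0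
    rw [div_le_iff₀ hpos, hND]
    exact (hC x).trans (mul_le_mul_of_nonneg_right (le_max_left C 0) (normU_nonneg' R x))
  have hBddB : BddBelow (ratioSet (Submodule.span 𝕂 {u} ⊔ UrS)
      (fun x => normDualS Θ R (A *ᵥ x)) (normU R)) := by
    refine ⟨0, fun t ht => ?_⟩
    obtain ⟨x, hx, hxne, rfl⟩ := ht
    exact div_nonneg (normDualS_nonneg' Θ R _) (normU_nonneg' R x)
  have hratio : ∀ w, w ∈ (Submodule.span 𝕂 {u} ⊔ UrS) → w ≠ 0 →
      ζΘ * normU R w ≤ normDualS Θ R (A *ᵥ w) ∧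
      normDualS Θ R (A *ᵥ w) ≤ ιΘ * normU R w := by
    intro w hw hwne
    have hpos := normU_pos' hR hwne
    have hmem : normDualS Θ R (A *ᵥ w) / normU R w ∈ ratioSet
        (Submodule.span 𝕂 {u} ⊔ UrS) (fun x => normDualS Θ R (A *ᵥ x)) (normU R) :=
      ⟨w, hw, hwne, rfl⟩
    have h1 := csInf_le hBddB hmem
    rw [← hζ] at h1
    have h2 := le_csSup hBddA hmem
    rw [← hι] at h2
    exact ⟨(le_div_iff₀ hpos).mp h1, (div_le_iff₀ hpos).mp h2⟩
  have hιnn : 0 ≤ ιΘ := by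
    rw [hι]
    refine Real.sSup_nonneg (fun t ht => ?_)
    obtain ⟨x, hx, hxne, rfl⟩ := ht
    exact div_nonneg (normDualS_nonneg' Θ R _) (normU_nonneg' R x)
  -- rank
  have hrank : Matrix.rank (Θ * R⁻¹ * A * Um) = r := by
    have hinj : Function.Injective (Θ * R⁻¹ * A * Um).mulVecLin := by
      rw [← LinearMap.ker_eq_bot]
      rw [LinearMap.ker_eq_bot']
      intro x hx
      by_contra hxne
      have hvne : Um *ᵥ x ≠ 0 := fun h => hxne (hUminj x h)
      have hb := (hratio (Um *ᵥ x) (Submodule.mem_sup_right (hUmmem x)) hvne).1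
      have hz : normDualS Θ R (A *ᵥ (Um *ᵥ x)) = 0 := by
        rw [hND, ← hVx]
        have : (Θ * R⁻¹ * A * Um) *ᵥ x = 0 := hx
        rw [this]
        simp [norm2, ip2]
      rw [hz] at hb
      exact absurd hb (not_le.mpr (mul_pos hζpos (normU_pos' hR hvne)))
    have : Matrix.rank (Θ * R⁻¹ * A * Um) =
        Module.finrank 𝕂 (LinearMap.range (Θ * R⁻¹ * A * Um).mulVecLin) := rfl
    rw [this, LinearMap.finrank_range_of_inj hinj, Module.finrank_fin_fun]
  refine ⟨hrank, ?_⟩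
  by_cases hr : r = 0
  · subst hr
    have hempty : {t | ∃ x : Fin 0 → 𝕂, x ≠ 0 ∧
        t = norm2 ((Θ * R⁻¹ * A * Um) *ᵥ x) / norm2 x} = ∅ := by
      apply Set.eq_empty_iff_forall_notMem.mpr
      rintro t ⟨x, hxne, _⟩
      exact hxne (Subsingleton.elim x 0)
    rw [hσmax, hσmin, hempty, Real.sSup_empty, Real.sInf_empty, zero_div]
    exact mul_nonneg (Real.sqrt_nonneg _) (div_nonneg hιnn hζpos.le)
  · have h1ε : (0:ℝ) < 1 - ε := by linarith
    have hs2 : 0 < Real.sqrt (1-ε) := Real.sqrt_pos.mpr h1ε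
    have hs1 : 0 < Real.sqrt (1+ε) := Real.sqrt_pos.mpr (by linarith)
    have helem : ∀ t ∈ {t | ∃ x : Fin r → 𝕂, x ≠ 0 ∧
        t = norm2 ((Θ * R⁻¹ * A * Um) *ᵥ x) / norm2 x},
        ζΘ / Real.sqrt (1+ε) ≤ t ∧ t ≤ ιΘ / Real.sqrt (1-ε) := by
      rintro t ⟨x, hxne, rfl⟩
      have hvU := hUmmem x
      have hvne : Um *ᵥ x ≠ 0 := fun h => hxne (hUminj x h)
      have hnum : norm2 ((Θ * R⁻¹ * A * Um) *ᵥ x) = normDualS Θ R (A *ᵥ (Um *ᵥ x)) := by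
        rw [hND, ← hVx]
      have hden : norm2 x = normUS Θ (Um *ᵥ x) := (key2 x).symm
      obtain ⟨hl, hup⟩ := hemb2 (Um *ᵥ x) hvU
      obtain ⟨hr1, hr2⟩ := hratio (Um *ᵥ x) (Submodule.mem_sup_right hvU) hvne
      have hnv := normU_pos' hR hvne
      have hUSpos : 0 < normUS Θ (Um *ᵥ x) :=
        lt_of_lt_of_le (by positivity) hl
      rw [hnum, hden]
      constructor
      · have heq : ζΘ / Real.sqrt (1+ε) =
            (ζΘ * normU R (Um *ᵥ x)) / (Real.sqrt (1+ε) * normU R (Um *ᵥ x)) := by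
          rw [mul_div_mul_right _ _ hnv.ne']
        rw [heq]
        exact div_le_div₀ (normDualS_nonneg' Θ R _) hr1 hUSpos hup
      · have heq : ιΘ / Real.sqrt (1-ε) =
            (ιΘ * normU R (Um *ᵥ x)) / (Real.sqrt (1-ε) * normU R (Um *ᵥ x)) := by
          rw [mul_div_mul_right _ _ hnv.ne']
        rw [heq]
        exact div_le_div₀ (mul_nonneg hιnn (normU_nonneg' R _)) hr2
          (by positivity) hl
    have hone : (fun _ : Fin r => (1:𝕂)) ≠ 0 := by
      intro h
      have := congrFun h ⟨0, Nat.pos_of_ne_zero hr⟩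
      simp at this
    have hSne : {t | ∃ x : Fin r → 𝕂, x ≠ 0 ∧
        t = norm2 ((Θ * R⁻¹ * A * Um) *ᵥ x) / norm2 x}.Nonempty :=
      ⟨_, ⟨(fun _ => 1), hone, rfl⟩⟩
    have hσminlb : ζΘ / Real.sqrt (1+ε) ≤ σmin := by
      rw [hσmin]
      exact le_csInf hSne (fun t ht => (helem t ht).1)
    have hσmaxub : σmax ≤ ιΘ / Real.sqrt (1-ε) := by
      rw [hσmax]
      exact Real.sSup_le (fun t ht => (helem t ht).2) (div_nonneg hιnn hs2.le)
    have hlb0 : 0 < ζΘ / Real.sqrt (1+ε) := div_pos hζpos hs1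
    calc σmax / σmin ≤ (ιΘ / Real.sqrt (1-ε)) / (ζΘ / Real.sqrt (1+ε)) :=
          div_le_div₀ (div_nonneg hιnn hs2.le) hσmaxub hlb0 hσminlb
      _ = Real.sqrt ((1+ε)/(1-ε)) * (ιΘ/ζΘ) := by
          rw [Real.sqrt_div (by linarith : (0:ℝ) ≤ 1+ε)]
          field_simp

end
end

section
/- Quasi-optimality of the sparse minimal residual approximation: let D ≥ 1 and τ ≥ 0. Suppose u_r ∈ W for some W ∈ L_r(D_K), that ‖r(u_r)‖_{U'} ≤ D · min_{W' ∈ L_r(D_K)} min_{w ∈ W'} ‖r(w)‖_{U'} + τ ‖b‖_{U'}, and that ζ_{r,K} > 0. Then ‖u − u_r‖_U ≤ (ι_{r,K}/ζ_{r,K}) · ( D · min_{W' ∈ L_r(D_K)} ‖u − P_{W'} u‖_U + τ ‖u‖_U ), where P_{W'} denotes the ⟨·,·⟩_U-orthogonal projection onto W'. -/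
open Matrix
open scoped ComplexOrder

noncomputable section

variable {𝕂 : Type*} [RCLike 𝕂]

section SparseAuxSec
open Pointwise

namespace SparseAux

variable {n : ℕ}

lemma ip2_inner (x y : Fin n → 𝕂) :
    ip2 x y = @inner 𝕂 _ _ ((WithLp.equiv 2 (Fin n → 𝕂)).symm x) ((WithLp.equiv 2 (Fin n → 𝕂)).symm y) := by
  rw [ip2, dotProduct_comm]; rfl

lemma normU_nonneg (R : Matrix (Fin n) (Fin n) 𝕂) (x : Fin n → 𝕂) : 0 ≤ normU R x :=
  Real.sqrt_nonneg _

lemma normDual_nonneg (R : Matrix (Fin n) (Fin n) 𝕂) (x : Fin n → 𝕂) : 0 ≤ normDual R x :=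
  Real.sqrt_nonneg _

lemma re_ipU (R : Matrix (Fin n) (Fin n) 𝕂) (x : Fin n → 𝕂) :
    RCLike.re (ipU R x x) = RCLike.re (star x ⬝ᵥ (R *ᵥ x)) := by
  rw [ipU, ip2, Matrix.star_dotProduct]
  simp

lemma normU_pos {R : Matrix (Fin n) (Fin n) 𝕂} (hR : R.PosDef) {x : Fin n → 𝕂} (hx : x ≠ 0) :
    0 < normU R x :=
  Real.sqrt_pos.2 (by rw [re_ipU]; exact hR.re_dotProduct_pos hx)

lemma normDual_pos {R : Matrix (Fin n) (Fin n) 𝕂} (hR : R.PosDef) {x : Fin n → 𝕂} (hx : x ≠ 0) :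
    0 < normDual R x :=
  Real.sqrt_pos.2 ((hR.inv).re_dotProduct_pos hx)

lemma normU_zero (R : Matrix (Fin n) (Fin n) 𝕂) : normU R (0 : Fin n → 𝕂) = 0 := by
  simp [normU, ipU, ip2]

lemma normDual_zero (R : Matrix (Fin n) (Fin n) 𝕂) : normDual R (0 : Fin n → 𝕂) = 0 := by
  simp [normDual, ipDual, ip2]

lemma normU_smul (R : Matrix (Fin n) (Fin n) 𝕂) (a : 𝕂) (x : Fin n → 𝕂) :
    normU R (a • x) = ‖a‖ * normU R x := by
  have h : ipU R (a • x) (a • x) = (‖a‖ ^ 2 : ℝ) * ipU R x x := by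
    rw [ipU, ipU, ip2, ip2, Matrix.mulVec_smul, star_smul, smul_dotProduct,
      dotProduct_smul, smul_eq_mul, smul_eq_mul, ← mul_assoc, ← starRingEnd_apply,
      RCLike.conj_mul]
    push_cast
    ring
  rw [normU, h, RCLike.re_ofReal_mul, Real.sqrt_mul (sq_nonneg _), Real.sqrt_sq (norm_nonneg _)]
  rfl


lemma mulVec_bound (M : Matrix (Fin n) (Fin n) 𝕂) :
    ∃ c : ℝ, 0 ≤ c ∧ ∀ x : Fin n → 𝕂,
      ‖(WithLp.equiv 2 (Fin n → 𝕂)).symm (M *ᵥ x)‖ ≤ c * ‖(WithLp.equiv 2 (Fin n → 𝕂)).symm x‖ := by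
  let L := (Matrix.toEuclideanLin M).toContinuousLinearMap
  refine ⟨‖L‖, norm_nonneg _, fun x => ?_⟩
  have h : (WithLp.equiv 2 (Fin n → 𝕂)).symm (M *ᵥ x)
      = L ((WithLp.equiv 2 (Fin n → 𝕂)).symm x) := by
    rfl
  rw [h]
  exact L.le_opNorm _

lemma coercive {R : Matrix (Fin n) (Fin n) 𝕂} (hR : R.PosDef) :
    ∃ m : ℝ, 0 < m ∧ ∀ x : Fin n → 𝕂,
      m * ‖(WithLp.equiv 2 (Fin n → 𝕂)).symm x‖ ≤ normU R x := by
  by_cases htriv : ∀ x : Fin n → 𝕂, x = 0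
  · refine ⟨1, one_pos, fun x => ?_⟩
    rw [htriv x]
    simp [normU_zero]
  push_neg at htriv
  obtain ⟨x₀, hx₀⟩ := htriv
  set E := EuclideanSpace 𝕂 (Fin n)
  set e : (Fin n → 𝕂) → E := fun v => (WithLp.equiv 2 (Fin n → 𝕂)).symm v with he
  have hcont : Continuous fun z : E => normU R (WithLp.equiv 2 (Fin n → 𝕂) z) := by
    have h1 : ∀ z : E, normU R (WithLp.equiv 2 (Fin n → 𝕂) z)
        = Real.sqrt (RCLike.re (@inner 𝕂 _ _ ((Matrix.toEuclideanLin R).toContinuousLinearMap z) z)) := by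
      intro z
      rw [normU, ipU, ip2_inner]
      rfl
    simp only [h1]
    exact Real.continuous_sqrt.comp (RCLike.continuous_re.comp
      (Continuous.inner (Matrix.toEuclideanLin R).toContinuousLinearMap.continuous continuous_id))
  have hsne : (Metric.sphere (0 : E) 1).Nonempty := by
    refine ⟨(‖e x₀‖⁻¹ : ℝ) • e x₀, ?_⟩
    have h0 : e x₀ ≠ 0 := by
      intro h; apply hx₀; simpa [he] using congrArg (WithLp.equiv 2 (Fin n → 𝕂)) h
    have hn : ‖e x₀‖ ≠ 0 := norm_ne_zero_iff.2 h0
    simp [norm_smul, abs_of_pos (inv_pos.2 (norm_pos_iff.2 h0)), inv_mul_cancel₀ hn]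
  obtain ⟨z₀, hz₀mem, hz₀min⟩ := (isCompact_sphere (0 : E) 1).exists_isMinOn hsne
    hcont.continuousOn
  set m := normU R (WithLp.equiv 2 (Fin n → 𝕂) z₀) with hm
  have hz₀ne : WithLp.equiv 2 (Fin n → 𝕂) z₀ ≠ 0 := by
    intro h
    have : z₀ = 0 := by
      have := congrArg (WithLp.equiv 2 (Fin n → 𝕂)).symm h
      simpa using this
    rw [this] at hz₀mem
    simp at hz₀mem
  have hmpos : 0 < m := normU_pos hR hz₀ne
  refine ⟨m, hmpos, fun x => ?_⟩
  by_cases hx : x = 0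
  · simp [hx, he, normU_zero]
  have hexne : e x ≠ 0 := by
    intro h; apply hx; simpa [he] using congrArg (WithLp.equiv 2 (Fin n → 𝕂)) h
  have hc : (0:ℝ) < ‖e x‖ := norm_pos_iff.2 hexne
  set c : ℝ := ‖e x‖ with hcdef
  set a : 𝕂 := ((c⁻¹ : ℝ) : 𝕂) with ha
  have hay : e (a • x) = a • e x := rfl
  have hmem : a • e x ∈ Metric.sphere (0 : E) 1 := by
    rw [mem_sphere_zero_iff_norm, norm_smul, ha]
    rw [RCLike.norm_ofReal]
    rw [abs_of_pos (inv_pos.2 hc)]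
    exact inv_mul_cancel₀ hc.ne'
  have hge : m ≤ normU R (a • x) := by
    have h : m ≤ normU R (WithLp.equiv 2 (Fin n → 𝕂) (a • e x)) := hz₀min hmem
    exact h
  have hsmul : normU R (a • x) = c⁻¹ * normU R x := by
    rw [normU_smul, ha, RCLike.norm_ofReal, abs_of_pos (inv_pos.2 hc)]
  rw [hsmul] at hge
  have := mul_le_mul_of_nonneg_left hge hc.le
  rw [mul_comm c m] at this
  calc m * ‖e x‖ = m * c := rfl
    _ ≤ c * (c⁻¹ * normU R x) := by linarith [mul_le_mul_of_nonneg_left hge hc.le]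
    _ = normU R x := by field_simp

lemma dual_bound {R : Matrix (Fin n) (Fin n) 𝕂} :
    ∃ c : ℝ, 0 ≤ c ∧ ∀ y : Fin n → 𝕂,
      normDual R y ≤ c * ‖(WithLp.equiv 2 (Fin n → 𝕂)).symm y‖ := by
  obtain ⟨cR, hcR, hbnd⟩ := mulVec_bound (𝕂 := 𝕂) (R⁻¹)
  refine ⟨Real.sqrt cR, Real.sqrt_nonneg _, fun y => ?_⟩
  set e : (Fin n → 𝕂) → EuclideanSpace 𝕂 (Fin n) := fun v => (WithLp.equiv 2 (Fin n → 𝕂)).symm v with he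
  have h1 : RCLike.re (ipDual R y y) ≤ cR * ‖e y‖ ^ 2 := by
    calc RCLike.re (ipDual R y y) ≤ ‖ipDual R y y‖ := RCLike.re_le_norm _
      _ = ‖@inner 𝕂 _ _ (e y) (e (R⁻¹ *ᵥ y))‖ := by rw [ipDual, ip2_inner]
      _ ≤ ‖e y‖ * ‖e (R⁻¹ *ᵥ y)‖ := norm_inner_le_norm _ _
      _ ≤ ‖e y‖ * (cR * ‖e y‖) := by
          exact mul_le_mul_of_nonneg_left (hbnd y) (norm_nonneg _)
      _ = cR * ‖e y‖ ^ 2 := by ring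
  calc normDual R y ≤ Real.sqrt (cR * ‖e y‖ ^ 2) := Real.sqrt_le_sqrt h1
    _ = Real.sqrt cR * ‖e y‖ := by
        rw [Real.sqrt_mul hcR, Real.sqrt_sq (norm_nonneg _)]

lemma ratio_bound {R : Matrix (Fin n) (Fin n) 𝕂} (hR : R.PosDef) (A : Matrix (Fin n) (Fin n) 𝕂) :
    ∃ C : ℝ, ∀ x : Fin n → 𝕂, normDual R (A *ᵥ x) ≤ C * normU R x := by
  obtain ⟨c1, hc1, h1⟩ := dual_bound (R := R)
  obtain ⟨cA, hcA, h2⟩ := mulVec_bound (𝕂 := 𝕂) A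
  obtain ⟨m, hm, h3⟩ := coercive hR
  refine ⟨c1 * cA / m, fun x => ?_⟩
  have e1 := h1 (A *ᵥ x)
  have e2 := h2 x
  have e3 := h3 x
  have hx : ‖(WithLp.equiv 2 (Fin n → 𝕂)).symm x‖ ≤ normU R x / m := by
    rw [le_div_iff₀ hm]; linarith
  calc normDual R (A *ᵥ x) ≤ c1 * ‖(WithLp.equiv 2 (Fin n → 𝕂)).symm (A *ᵥ x)‖ := e1
    _ ≤ c1 * (cA * ‖(WithLp.equiv 2 (Fin n → 𝕂)).symm x‖) :=
        mul_le_mul_of_nonneg_left e2 hc1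
    _ ≤ c1 * (cA * (normU R x / m)) := by
        exact mul_le_mul_of_nonneg_left (mul_le_mul_of_nonneg_left hx hcA) hc1
    _ = c1 * cA / m * normU R x := by ring


lemma le_mul_sInf {a c : ℝ} (hc : 0 ≤ c) {S : Set ℝ} (hS : S.Nonempty)
    (h : ∀ s ∈ S, a ≤ c * s) : a ≤ c * sInf S := by
  rw [← smul_eq_mul, ← Real.sInf_smul_of_nonneg hc]
  refine le_csInf hS.smul_set ?_
  rintro b ⟨s, hs, rfl⟩
  simpa using h s hs

end SparseAux

end SparseAuxSec

/-- Quasi-optimality of the sparse minimal residual approximation. -/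
theorem sparse_minres_quasi_optimality {𝕂 : Type*} [RCLike 𝕂] {n K r : ℕ}
    (R A : Matrix (Fin n) (Fin n) 𝕂) (hR : R.PosDef) (hA : IsUnit A.det)
    (b u : Fin n → 𝕂) (hu : u = A⁻¹ *ᵥ b)
    (D : Finset (Fin n → 𝕂)) (hD : D.card = K)
    (Dc τ : ℝ) (hDc : 1 ≤ Dc) (hτ : 0 ≤ τ)
    (ur : Fin n → 𝕂) (W : Submodule 𝕂 (Fin n → 𝕂)) (hW : W ∈ LrD D r) (hurW : ur ∈ W)
    (hres : normDual R (b - A *ᵥ ur)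
      ≤ Dc * sInf {t | ∃ W' ∈ LrD D r, ∃ w ∈ W', t = normDual R (b - A *ᵥ w)}
        + τ * normDual R b)
    (ζ ι : ℝ)
    (hζ : ζ = sInf (dictRatioSet D r u (fun x => normDual R (A *ᵥ x)) (normU R)))
    (hι : ι = sSup (dictRatioSet D r u (fun x => normDual R (A *ᵥ x)) (normU R)))
    (hζpos : 0 < ζ) :
    normU R (u - ur)
      ≤ (ι / ζ) * (Dc * sInf {t | ∃ W' ∈ LrD D r, t = distU R u W'} + τ * normU R u) := by
  classical
  set Sig := dictRatioSet D r u (fun x => normDual R (A *ᵥ x)) (normU R) with hSigdef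
  obtain ⟨C, hC⟩ := SparseAux.ratio_bound hR A
  have hbddSig : BddAbove Sig := by
    refine ⟨C, ?_⟩
    rintro t ⟨W', hW', x, hx, hxne, rfl⟩
    have hden := SparseAux.normU_pos hR hxne
    exact (div_le_iff₀ hden).2 (hC x)
  have hSig0 : ∀ t ∈ Sig, 0 ≤ t := by
    rintro t ⟨W', hW', x, hx, hxne, rfl⟩
    exact div_nonneg (SparseAux.normDual_nonneg _ _) (SparseAux.normU_nonneg _ _)
  have hSigne : Sig.Nonempty := by
    rw [Set.nonempty_iff_ne_empty]
    intro h
    rw [hζ, h, Real.sInf_empty] at hζpos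
    exact lt_irrefl 0 hζpos
  have hι0 : 0 ≤ ι := by
    obtain ⟨t, ht⟩ := hSigne
    exact le_trans (hSig0 t ht) (by rw [hι]; exact le_csSup hbddSig ht)
  have hAu : A *ᵥ u = b := by
    rw [hu, Matrix.mulVec_mulVec, Matrix.mul_nonsing_inv _ hA, Matrix.one_mulVec]
  have hsub : ∀ w : Fin n → 𝕂, b - A *ᵥ w = A *ᵥ (u - w) := fun w => by
    rw [Matrix.mulVec_sub, hAu]
  have hι_ge : ∀ W' ∈ LrD D r, ∀ x ∈ Submodule.span 𝕂 {u} ⊔ W',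
      normDual R (A *ᵥ x) ≤ ι * normU R x := by
    intro W' hW' x hx
    by_cases hx0 : x = 0
    · simp [hx0, Matrix.mulVec_zero, SparseAux.normDual_zero, SparseAux.normU_zero]
    have hden := SparseAux.normU_pos hR hx0
    have hmem : normDual R (A *ᵥ x) / normU R x ∈ Sig := ⟨W', hW', x, hx, hx0, rfl⟩
    have h := le_csSup hbddSig hmem
    rw [← hι] at h
    exact (div_le_iff₀ hden).1 h
  have hζ_le : ∀ W' ∈ LrD D r, ∀ x ∈ Submodule.span 𝕂 {u} ⊔ W',
      ζ * normU R x ≤ normDual R (A *ᵥ x) := by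
    intro W' hW' x hx
    by_cases hx0 : x = 0
    · simp [hx0, Matrix.mulVec_zero, SparseAux.normDual_zero, SparseAux.normU_zero]
    have hden := SparseAux.normU_pos hR hx0
    have hmem : normDual R (A *ᵥ x) / normU R x ∈ Sig := ⟨W', hW', x, hx, hx0, rfl⟩
    have h := csInf_le ⟨0, fun t ht => hSig0 t ht⟩ hmem
    rw [← hζ] at h
    exact (le_div_iff₀ hden).1 h
  have hmemsub : ∀ (W' : Submodule 𝕂 (Fin n → 𝕂)), ∀ w ∈ W',
      u - w ∈ Submodule.span 𝕂 {u} ⊔ W' := fun W' w hw =>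
    sub_mem (Submodule.mem_sup_left (Submodule.mem_span_singleton_self u))
      (Submodule.mem_sup_right hw)
  set resSet := {t | ∃ W' ∈ LrD D r, ∃ w ∈ W', t = normDual R (b - A *ᵥ w)} with hresdef
  set distSet := {t | ∃ W' ∈ LrD D r, t = distU R u W'} with hdistdef
  have hresBdd : BddBelow resSet := by
    refine ⟨0, ?_⟩
    rintro t ⟨W', hW', w, hw, rfl⟩
    exact SparseAux.normDual_nonneg _ _
  have h2 : sInf resSet ≤ ι * sInf distSet := by
    refine SparseAux.le_mul_sInf hι0 ⟨distU R u W, W, hW, rfl⟩ ?_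
    rintro s ⟨W', hW', rfl⟩
    rw [distU]
    refine SparseAux.le_mul_sInf hι0 ⟨normU R (u - 0), 0, W'.zero_mem, rfl⟩ ?_
    rintro s ⟨w, hw, rfl⟩
    calc sInf resSet ≤ normDual R (b - A *ᵥ w) := csInf_le hresBdd ⟨W', hW', w, hw, rfl⟩
      _ ≤ ι * normU R (u - w) := by
          rw [hsub]; exact hι_ge W' hW' _ (hmemsub W' w hw)
  have h3 : normDual R b ≤ ι * normU R u := by
    have h := hι_ge W hW u (Submodule.mem_sup_left (Submodule.mem_span_singleton_self u))
    rwa [hAu] at h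
  have h1 : ζ * normU R (u - ur) ≤ normDual R (b - A *ᵥ ur) := by
    rw [hsub]; exact hζ_le W hW _ (hmemsub W ur hurW)
  have hDc0 : (0:ℝ) ≤ Dc := le_trans zero_le_one hDc
  have hchain : ζ * normU R (u - ur)
      ≤ ι * (Dc * sInf distSet + τ * normU R u) := by
    calc ζ * normU R (u - ur) ≤ Dc * sInf resSet + τ * normDual R b := le_trans h1 hres
      _ ≤ Dc * (ι * sInf distSet) + τ * (ι * normU R u) :=
          add_le_add (mul_le_mul_of_nonneg_left h2 hDc0) (mul_le_mul_of_nonneg_left h3 hτ)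
      _ = ι * (Dc * sInf distSet + τ * normU R u) := by ring
  rw [div_mul_eq_mul_div, le_div_iff₀ hζpos]
  calc normU R (u - ur) * ζ = ζ * normU R (u - ur) := mul_comm _ _
    _ ≤ _ := hchain

end
end
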